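/- arXiv:math/0306124 — 8 statements merged into one kernel-verified Lean document; each statement's English description precedes it below -/
import Mathlib

section
/- Let P be a proper parabolic subgroup of GL_N(F_q). If h ∈ P has characteristic polynomial equal to f(X)^l for some polynomial f irreducible over F_q, then deg(f) divides gcd(a,b) for some decomposition N = a + b with a,b ≥ 1 coming from the block structure of P; in particular all roots of f lie in a proper subfield F of F_{q^N} that is independent of h. -/
open Polynomial

lemma aux_dvd_natDegree {F : Type} [Field F] {f p : F[X]} (hf : Irreducible f) {l : ℕ}
    (hp : p ∣ f ^ l) : f.natDegree ∣ p.natDegree := by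
  have hfp : Prime f := (UniqueFactorizationMonoid.irreducible_iff_prime).mp hf
  obtain ⟨i, _, hass⟩ := (dvd_prime_pow hfp l).mp hp
  rw [natDegree_eq_of_degree_eq (degree_eq_degree_of_associated hass), natDegree_pow]
  exact dvd_mul_left _ i

lemma aux_pow_fix {K : Type*} [Monoid K] {x : K} {q m : ℕ} (hx : x ^ q ^ m = x) (c : ℕ) :
    x ^ q ^ (m * c) = x := by
  induction c with
  | zero => simp
  | succ n ih => rw [Nat.mul_succ, pow_add, pow_mul, ih, hx]

/-- Every proper parabolic subgroup of `GL_N(𝔽_q)` is "sufficiently small": if `P` is the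
stabilizer of a nonzero proper subspace `W` of dimension `a` (so `N = a + (N - a)` is the
block decomposition), and `h ∈ P` has characteristic polynomial `f ^ l` with `f`
irreducible over `𝔽_q`, then `deg f` divides `gcd(a, N - a)`, and hence all roots of the
characteristic polynomial lie in the subfield `𝔽_{q^d}` with `d = gcd(a, N - a)`, a proper
subfield of `𝔽_{q^N}` independent of `h`. -/
theorem stmt_0 {F : Type} [Field F] [Fintype F] (q N : ℕ) (hq : q = Fintype.card F)
    (hN : 1 < N) (W : Submodule F (Fin N → F))
    (ha : 0 < Module.finrank F W) (ha' : Module.finrank F W < N) :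
    0 < Nat.gcd (Module.finrank F W) (N - Module.finrank F W) ∧
    Nat.gcd (Module.finrank F W) (N - Module.finrank F W) ∣ N ∧
    Nat.gcd (Module.finrank F W) (N - Module.finrank F W) < N ∧
    ∀ h : Matrix (Fin N) (Fin N) F, IsUnit h → (∀ v ∈ W, h.mulVec v ∈ W) →
      ∀ f : Polynomial F, Irreducible f → (∃ l : ℕ, h.charpoly = f ^ l) →
        f.natDegree ∣ Nat.gcd (Module.finrank F W) (N - Module.finrank F W) ∧
        ∀ x : AlgebraicClosure F, aeval x h.charpoly = 0 →
          x ^ q ^ Nat.gcd (Module.finrank F W) (N - Module.finrank F W) = x := by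
  classical
  set a := Module.finrank F W with haa
  set d := Nat.gcd a (N - a) with hd
  have hNfin : Module.finrank F (Fin N → F) = N := Module.finrank_fin_fun F
  obtain ⟨W', hWc⟩ := Submodule.exists_isCompl W
  have hsum : a + Module.finrank F W' = N := by
    rw [haa, Submodule.finrank_add_eq_of_isCompl hWc, hNfin]
  have hb : Module.finrank F W' = N - a := by omega
  have hgpos : 0 < d := Nat.gcd_pos_of_pos_left _ ha
  have hgdvd : d ∣ N := by
    have h1 := Nat.dvd_add (Nat.gcd_dvd_left a (N - a)) (Nat.gcd_dvd_right a (N - a))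
    rwa [show a + (N - a) = N by omega] at h1
  have hglt : d < N := lt_of_le_of_lt (Nat.le_of_dvd ha (Nat.gcd_dvd_left _ _)) ha'
  refine ⟨hgpos, hgdvd, hglt, ?_⟩
  rintro h _ hinv f hf ⟨l, hcp⟩
  have hdvd : f.natDegree ∣ d := by
    let bW := Module.finBasis F W
    let bW' := Module.finBasis F W'
    let e := Submodule.prodEquivOfIsCompl W W' hWc
    let bV : Module.Basis (Fin (Module.finrank F W) ⊕ Fin (Module.finrank F W')) F (Fin N → F) :=
      (bW.prod bW').map e
    let φ : Module.End F (Fin N → F) :=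
      Matrix.toLin (Pi.basisFun F (Fin N)) (Pi.basisFun F (Fin N)) h
    have hφ : ∀ v, φ v = h.mulVec v := by
      intro v
      simp [φ, Matrix.toLin_eq_toLin', Matrix.toLin'_apply]
    let M := LinearMap.toMatrix bV bV φ
    have hMch : M.charpoly = h.charpoly := by
      rw [LinearMap.charpoly_toMatrix, ← LinearMap.charpoly_toMatrix φ (Pi.basisFun F (Fin N)),
        LinearMap.toMatrix_toLin]
    have h21 : M.toBlocks₂₁ = 0 := by
      ext i j
      simp only [Matrix.toBlocks₂₁, Matrix.of_apply, Matrix.zero_apply]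
      rw [show M (Sum.inr i) (Sum.inl j) = bV.repr (φ (bV (Sum.inl j))) (Sum.inr i) from
        LinearMap.toMatrix_apply bV bV φ (Sum.inr i) (Sum.inl j)]
      have h1 : bV (Sum.inl j) = (bW j : Fin N → F) := by
        rw [Module.Basis.map_apply, Module.Basis.prod_apply]
        simp [e, Submodule.coe_prodEquivOfIsCompl']
      rw [h1, hφ]
      have hz : h.mulVec (bW j : Fin N → F) ∈ W := hinv _ (bW j).2
      have h2 : bV.repr (h.mulVec (bW j : Fin N → F)) =
          (bW.prod bW').repr (e.symm (h.mulVec (bW j : Fin N → F))) := by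
        rw [Module.Basis.map_repr]; rfl
      rw [h2]
      have h3 : e.symm (h.mulVec (bW j : Fin N → F)) = (⟨_, hz⟩, 0) :=
        Submodule.prodEquivOfIsCompl_symm_apply_left W W' hWc ⟨_, hz⟩
      rw [h3, Module.Basis.prod_repr_inr]
      show bW'.repr 0 i = 0
      rw [bW'.repr.map_zero]
      rfl
    have hprod : M.toBlocks₁₁.charpoly * M.toBlocks₂₂.charpoly = f ^ l := by
      have hM : M = Matrix.fromBlocks M.toBlocks₁₁ M.toBlocks₁₂ 0 M.toBlocks₂₂ := by
        rw [← h21, Matrix.fromBlocks_toBlocks]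
      have := congrArg Matrix.charpoly hM
      rw [Matrix.charpoly_fromBlocks_zero₂₁, hMch, hcp] at this
      exact this.symm
    have hdvd1 : f.natDegree ∣ a := by
      have := aux_dvd_natDegree hf (Dvd.intro _ hprod)
      rwa [Matrix.charpoly_natDegree_eq_dim, Fintype.card_fin] at this
    have hdvd2 : f.natDegree ∣ N - a := by
      have := aux_dvd_natDegree hf (Dvd.intro_left _ hprod)
      rwa [Matrix.charpoly_natDegree_eq_dim, Fintype.card_fin, hb] at this
    exact Nat.dvd_gcd hdvd1 hdvd2
  refine ⟨hdvd, ?_⟩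
  intro x hx
  rw [hcp, map_pow] at hx
  have hl : l ≠ 0 := by rintro rfl; simp at hx
  have hx' : aeval x f = 0 := pow_eq_zero_iff hl |>.mp hx
  have hxint : IsIntegral F x := IsAlgebraic.isIntegral ⟨f, hf.ne_zero, hx'⟩
  have hmin : minpoly F x = f * C f.leadingCoeff⁻¹ := (minpoly.eq_of_irreducible hf hx').symm
  have hclf : (C f.leadingCoeff⁻¹ : F[X]) ≠ 0 := by
    simp [inv_ne_zero, leadingCoeff_ne_zero.mpr hf.ne_zero]
  have hmindeg : (minpoly F x).natDegree = f.natDegree := by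
    rw [hmin, natDegree_mul hf.ne_zero hclf, natDegree_C, add_zero]
  haveI := IntermediateField.adjoin.finiteDimensional hxint
  haveI : Fintype (IntermediateField.adjoin F {x} : IntermediateField F (AlgebraicClosure F)) :=
    haveI : Finite (IntermediateField.adjoin F {x} : IntermediateField F (AlgebraicClosure F)) := Module.finite_of_finite F
    Fintype.ofFinite _
  have hcard : Fintype.card (IntermediateField.adjoin F {x} :
      IntermediateField F (AlgebraicClosure F)) = q ^ f.natDegree := by
    rw [Module.card_eq_pow_finrank (K := F), IntermediateField.adjoin.finrank hxint, hmindeg, hq]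
  have hgen := FiniteField.pow_card (IntermediateField.AdjoinSimple.gen F x)
  rw [hcard] at hgen
  have hxm : x ^ q ^ f.natDegree = x := by
    have := congrArg (algebraMap (IntermediateField.adjoin F {x} :
      IntermediateField F (AlgebraicClosure F)) (AlgebraicClosure F)) hgen
    rwa [map_pow, IntermediateField.AdjoinSimple.algebraMap_gen] at this
  obtain ⟨c, hc⟩ := hdvd
  rw [hc]
  exact aux_pow_fix hxm c
end

section
/- Let W be an N-dimensional vector space over F_{q^a}, viewed also as an F_q-vector space via restriction of scalars, giving an algebra embedding ι : End_{F_{q^a}}(W) → End_{F_q}(W). If h ∈ Aut_{F_{q^a}}(W) has characteristic polynomial (over F_{q^a}) equal to a power of an irreducible polynomial f(X) ∈ F_{q^a}[X], then the characteristic polynomial of ι(h) over F_q is a power of the irreducible polynomial f̃(X) = ∏_{ξ ∈ Gal(F_{q^b}/F_q)} f^ξ(X), where F_{q^b} is the field generated over F_q by the coefficients of f. -/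
open Polynomial TensorProduct
open scoped TensorProduct

lemma eval_charpoly_eq_det {n Ω : Type*} [DecidableEq n] [Fintype n] [CommRing Ω]
    (M : Matrix n n Ω) (μ : Ω) :
    M.charpoly.eval μ = ((μ • (1 : Matrix n n Ω)) - M).det := by
  rw [Matrix.charpoly, ← Polynomial.coe_evalRingHom, RingHom.map_det]
  congr 1
  ext i j
  by_cases hij : i = j <;>
    simp [Matrix.charmatrix_apply, hij, Matrix.one_apply, Matrix.smul_apply, Matrix.sub_apply]

lemma exists_eigenvector_of_isRoot_charpoly {Ω V : Type*} [Field Ω] [AddCommGroup V] [Module Ω V]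
    [FiniteDimensional Ω V] (φ : V →ₗ[Ω] V) (μ : Ω)
    (hμ : (LinearMap.charpoly φ).eval μ = 0) :
    ∃ v : V, v ≠ 0 ∧ φ v = μ • v := by
  classical
  have hdet : LinearMap.det (μ • (LinearMap.id : V →ₗ[Ω] V) - φ) = 0 := by
    let b := Module.Free.chooseBasis Ω V
    rw [← LinearMap.det_toMatrix b]
    have h1 : LinearMap.toMatrix b b (μ • (LinearMap.id : V →ₗ[Ω] V) - φ)
        = μ • (1 : Matrix _ _ Ω) - LinearMap.toMatrix b b φ := by
      simp [map_sub, map_smul, LinearMap.toMatrix_id]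
    rw [h1, ← eval_charpoly_eq_det, LinearMap.charpoly_toMatrix φ b, hμ]
  have hker := LinearMap.bot_lt_ker_of_det_eq_zero hdet
  obtain ⟨v, hv, hv0⟩ := SetLike.exists_of_lt hker
  refine ⟨v, by simpa using hv0, ?_⟩
  have h2 := LinearMap.mem_ker.mp hv
  simp only [LinearMap.sub_apply, LinearMap.smul_apply, LinearMap.id_apply, sub_eq_zero] at h2
  exact h2.symm

lemma monic_eq_pow_aux {F : Type*} [Field F] (g : F[X]) (hgi : Irreducible g) :
    ∀ N p, p.natDegree ≤ N → p.Monic →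
      (∀ q : F[X], q.Monic → Irreducible q → q ∣ p → q = g) → ∃ n, p = g ^ n := by
  intro N
  induction N with
  | zero =>
    intro p hdeg hp _
    exact ⟨0, by rw [pow_zero]; exact hp.natDegree_eq_zero.mp (Nat.le_zero.mp hdeg)⟩
  | succ N ih =>
    intro p hdeg hp H
    by_cases h0 : p.natDegree = 0
    · exact ⟨0, by rw [pow_zero]; exact hp.natDegree_eq_zero.mp h0⟩
    · have hpne : p ≠ 0 := hp.ne_zero
      have hpu : ¬ IsUnit p := by
        intro hu
        exact h0 (Polynomial.natDegree_eq_zero_of_isUnit hu)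
      obtain ⟨i, hirr, hdvd⟩ := WfDvdMonoid.exists_irreducible_factor hpu hpne
      have hine : i ≠ 0 := hirr.ne_zero
      set q := i * C i.leadingCoeff⁻¹ with hq
      have hqm : q.Monic := Polynomial.monic_mul_leadingCoeff_inv hine
      have hu : IsUnit (C i.leadingCoeff⁻¹) := Polynomial.isUnit_C.mpr
        (isUnit_iff_ne_zero.mpr (inv_ne_zero (Polynomial.leadingCoeff_ne_zero.mpr hine)))
      have hassoc : Associated i q := ⟨hu.unit, by rw [IsUnit.unit_spec]⟩
      have hqi : Irreducible q := hassoc.irreducible hirr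
      have hqd : q ∣ p := hassoc.symm.dvd.trans hdvd
      have hqg : q = g := H q hqm hqi hqd
      obtain ⟨r, hr⟩ := hqd
      rw [hqg] at hr
      have hgm : g.Monic := hqg ▸ hqm
      have hrm : r.Monic := hgm.of_mul_monic_left (hr ▸ hp)
      have hgd : 1 ≤ g.natDegree := hgi.natDegree_pos
      have hrdeg : r.natDegree ≤ N := by
        have : p.natDegree = g.natDegree + r.natDegree := by
          rw [hr]; exact Polynomial.natDegree_mul hgm.ne_zero hrm.ne_zero
        omega
      obtain ⟨n, hn⟩ := ih r hrdeg hrm (fun q h1 h2 h3 => H q h1 h2 (h3.trans ⟨g, by rw [hr]; ring⟩))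
      exact ⟨n + 1, by rw [hr, hn, pow_succ, mul_comm]⟩

lemma pow_apply_eig {Ω V : Type*} [CommSemiring Ω] [AddCommMonoid V] [Module Ω V]
    (φ : Module.End Ω V) {t : Ω} {w : V} (hw : φ w = t • w) :
    ∀ n : ℕ, (φ ^ n) w = t ^ n • w := by
  intro n
  induction n with
  | zero => simp
  | succ n ih =>
    rw [pow_succ', Module.End.mul_apply, ih, map_smul, hw, smul_smul, ← pow_succ]

set_option maxHeartbeats 2000000 in
/-- Restriction of scalars and characteristic polynomials: let `K/F` be an extension of
finite fields and `W` a finite-dimensional `K`-vector space, giving an algebra embedding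
`ι : End_K(W) → End_F(W)`. If the characteristic polynomial over `K` of a bijective
`K`-linear `h : W → W` is a power of an irreducible `f ∈ K[X]`, then the characteristic
polynomial of `ι(h) = h` over `F` is a power of an irreducible polynomial `g ∈ F[X]`
(namely `f̃`, the product of the Galois conjugates of `f`, characterized by being the
irreducible polynomial over `F` divisible by `f` after base change to `K`). -/
theorem stmt_2 {F K W : Type} [Field F] [Fintype F] [Field K] [Algebra F K]
    [FiniteDimensional F K] [AddCommGroup W] [Module K W] [Module F W]
    [IsScalarTower F K W] [FiniteDimensional K W] [FiniteDimensional F W]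
    (h : W →ₗ[K] W) (hbij : Function.Bijective h)
    (f : Polynomial K) (hf : Irreducible f) (l : ℕ)
    (hchar : LinearMap.charpoly h = f ^ l) :
    ∃ g : Polynomial F, Irreducible g ∧ f ∣ g.map (algebraMap F K) ∧
      ∃ n : ℕ, LinearMap.charpoly (LinearMap.restrictScalars F h) = g ^ n := by
  classical
  set Ω := AlgebraicClosure K with hΩ
  -- a root of f in Ω
  have hfd : f.degree ≠ 0 := by
    have := hf.natDegree_pos
    exact (Polynomial.natDegree_pos_iff_degree_pos.mp this).ne'
  obtain ⟨α, hα⟩ := IsAlgClosed.exists_aeval_eq_zero Ω f hfd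
  have hKint : IsIntegral K α := (AlgebraicClosure.isAlgebraic K).isAlgebraic α |>.isIntegral
  have hαint : IsIntegral F α := by
    have : Algebra.IsIntegral F K := Algebra.IsIntegral.of_finite F K
    exact isIntegral_trans α hKint
  set g := minpoly F α with hg
  have hgmonic : g.Monic := minpoly.monic hαint
  have hgirr : Irreducible g := minpoly.irreducible hαint
  have hfdvd : f ∣ g.map (algebraMap F K) := by
    have h1 : minpoly K α ∣ g.map (algebraMap F K) :=
      minpoly.dvd _ _ (by rw [Polynomial.aeval_map_algebraMap]; exact minpoly.aeval F α)
    have h2 : Associated f (minpoly K α) :=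
      ((minpoly.irreducible hKint).associated_of_dvd hf (minpoly.dvd K α hα)).symm
    exact h2.dvd.trans h1
  refine ⟨g, hgirr, hfdvd, ?_⟩
  set x := LinearMap.restrictScalars F h with hx
  -- the algebra homomorphisms
  let resAlg : Module.End K W →ₐ[F] Module.End F W :=
    { toFun := fun φ => φ.restrictScalars F
      map_one' := rfl
      map_mul' := fun a b => rfl
      map_zero' := rfl
      map_add' := fun a b => rfl
      commutes' := fun a => rfl }
  let bc : Module.End F W →ₐ[F] Module.End Ω (Ω ⊗[F] W) := Module.End.baseChangeHom F Ω W
  let aev : Polynomial K →ₐ[F] Module.End K W :=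
    AlgHom.restrictScalars F (Polynomial.aeval (R := K) (A := Module.End K W) h)
  let D : Polynomial K →ₐ[F] Module.End Ω (Ω ⊗[F] W) :=
    (bc.comp resAlg).comp aev
  let ψ : K →ₐ[F] Module.End Ω (Ω ⊗[F] W) := D.comp (AlgHom.restrictScalars F (Polynomial.CAlgHom (R := K) (A := K)))
  have hDX : D X = LinearMap.baseChange Ω x := by
    simp only [D, aev, AlgHom.comp_apply, AlgHom.coe_restrictScalars', Polynomial.aeval_X]
    rfl
  have hDC : ∀ c : K, D (C c) = ψ c := fun c => rfl
  have hD0 : D (f ^ l) = 0 := by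
    have hz : Polynomial.aeval h (f ^ l) = 0 := by
      rw [← hchar]; exact h.aeval_self_charpoly
    simp only [D, aev, AlgHom.comp_apply, AlgHom.coe_restrictScalars', hz, map_zero]
  -- the key claim
  have key : ∀ ν : Ω, (x.charpoly.map (algebraMap F Ω)).eval ν = 0 →
      (g.map (algebraMap F Ω)).eval ν = 0 := by
    intro ν hν
    rcases Nat.eq_zero_or_pos l with hl | hl
    · exfalso
      have h1 : (LinearMap.charpoly h).natDegree = 0 := by
        rw [hchar, hl, pow_zero, Polynomial.natDegree_one]
      rw [LinearMap.charpoly_natDegree] at h1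
      have hsub : Subsingleton W := by
        have := Module.finrank_zero_iff (R := K) (M := W)
        exact this.mp h1
      have h2 : x.charpoly.natDegree = 0 := by
        rw [LinearMap.charpoly_natDegree]
        exact Module.finrank_zero_of_subsingleton
      have h3 : x.charpoly = 1 := x.charpoly_monic.natDegree_eq_zero.mp h2
      rw [h3] at hν
      simp at hν
    -- the eigenvector for ν
    have hch : (x.baseChange Ω).charpoly = x.charpoly.map (algebraMap F Ω) :=
      x.charpoly_baseChange Ω
    obtain ⟨v, hv0, hveq⟩ := exists_eigenvector_of_isRoot_charpoly (x.baseChange Ω) ν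
      (by rw [hch]; exact hν)
    -- primitive element
    have hFinK : Finite K := Module.finite_of_finite F
    obtain ⟨γ, hγ⟩ := Field.exists_primitive_element_of_finite_top F K
    have hrange : ∀ c : K, ∃ p : Polynomial F, Polynomial.aeval γ p = c := by
      intro c
      have h1 : Algebra.adjoin F {γ} = ⊤ := by
        have h2 := IntermediateField.adjoin_simple_toSubalgebra_of_isAlgebraic
          (IsIntegral.of_finite F γ).isAlgebraic
        rw [hγ, IntermediateField.top_toSubalgebra] at h2
        exact h2.symm
      have h2 : c ∈ Algebra.adjoin F {γ} := h1.symm ▸ Algebra.mem_top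
      rwa [Algebra.adjoin_singleton_eq_range_aeval] at h2
    -- ψ γ preserves the eigenspace
    set XΩ := LinearMap.baseChange Ω x with hXΩ
    have hcomm : ψ γ * XΩ = XΩ * ψ γ := by
      rw [← hDX, ← hDC, ← map_mul, ← map_mul, mul_comm]
    set V := LinearMap.ker (XΩ - ν • (LinearMap.id : Ω ⊗[F] W →ₗ[Ω] Ω ⊗[F] W)) with hV
    have hmemV : ∀ u, u ∈ V ↔ XΩ u = ν • u := by
      intro u
      rw [hV, LinearMap.mem_ker, LinearMap.sub_apply, LinearMap.smul_apply, LinearMap.id_apply,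
        sub_eq_zero]
    have hstab : ∀ u ∈ V, (ψ γ : Module.End Ω (Ω ⊗[F] W)) u ∈ V := by
      intro u hu
      rw [hmemV] at hu ⊢
      have := congrArg (fun φ : Module.End Ω (Ω ⊗[F] W) => φ u) hcomm.symm
      simp only [Module.End.mul_apply] at this
      rw [this, hu, map_smul]
    let φV : V →ₗ[Ω] V := LinearMap.restrict (ψ γ) hstab
    have : Nontrivial V := by
      refine nontrivial_of_ne ⟨v, (hmemV v).mpr hveq⟩ 0 ?_
      intro hcontra
      exact hv0 (by simpa using congrArg Subtype.val hcontra)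
    obtain ⟨ρ, hρ⟩ := Module.End.exists_eigenvalue (K := Ω) (V := V) φV
    obtain ⟨w', hw'⟩ := hρ.exists_hasEigenvector
    set w : Ω ⊗[F] W := (w' : Ω ⊗[F] W) with hwdef
    have hw0 : w ≠ 0 := fun hc => hw'.right (Subtype.ext hc)
    have hwx : XΩ w = ν • w := (hmemV w).mp w'.2
    have hwγ : ψ γ w = ρ • w := by
      have h1 : φV w' = ρ • w' := Module.End.mem_eigenspace_iff.mp hw'.left
      have h2 := congrArg Subtype.val h1
      rwa [LinearMap.restrict_apply] at h2
    -- every ψ c acts as a scalar on w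
    have hscal : ∀ c : K, ∃ t : Ω, ψ c w = t • w := by
      intro c
      obtain ⟨p, hp⟩ := hrange c
      refine ⟨(p.map (algebraMap F Ω)).eval ρ, ?_⟩
      have h1 : ψ c = Polynomial.aeval (ψ γ) p := by
        rw [← hp, Polynomial.aeval_algHom_apply]
      rw [h1]
      clear h1 hp
      induction p using Polynomial.induction_on' with
      | add p q hp hq =>
        rw [map_add, LinearMap.add_apply, hp, hq, Polynomial.map_add, Polynomial.eval_add,
          add_smul]
      | monomial n a =>
        rw [Polynomial.aeval_monomial, Module.algebraMap_end_eq_smul_id, Module.End.mul_apply,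
          LinearMap.smul_apply, LinearMap.id_apply, pow_apply_eig (ψ γ) hwγ n,
          Polynomial.map_monomial, Polynomial.eval_monomial,
          ← algebraMap_smul Ω a (ρ ^ n • w), smul_smul]
    -- D of any polynomial acts as a scalar on w
    have hA : ∀ Q : Polynomial K, ∃ t : Ω, D Q w = t • w := by
      intro Q
      induction Q using Polynomial.induction_on' with
      | add p q hp hq =>
        obtain ⟨t1, h1⟩ := hp; obtain ⟨t2, h2⟩ := hq
        exact ⟨t1 + t2, by rw [map_add, LinearMap.add_apply, h1, h2, add_smul]⟩
      | monomial n c =>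
        obtain ⟨t, ht⟩ := hscal c
        refine ⟨ν ^ n * t, ?_⟩
        rw [← Polynomial.C_mul_X_pow_eq_monomial, map_mul, map_pow, hDX, hDC,
          Module.End.mul_apply, pow_apply_eig (LinearMap.baseChange Ω x) hwx n,
          map_smul, ht, smul_smul]
    -- conclude
    obtain ⟨r, hrr⟩ := hfdvd
    have hgl : D ((g.map (algebraMap F K)) ^ l) w = 0 := by
      rw [hrr, mul_pow, map_mul, hD0, zero_mul, LinearMap.zero_apply]
    obtain ⟨t, ht⟩ := hA (g.map (algebraMap F K))
    have htl : t ^ l • w = 0 := by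
      rw [← pow_apply_eig (D (g.map (algebraMap F K))) ht l, ← map_pow, hgl]
    have ht0 : t = 0 := by
      have h2 : t ^ l = 0 := (smul_eq_zero.mp htl).resolve_right hw0
      exact pow_eq_zero_iff hl.ne' |>.mp h2
    -- compute D (g.map) w explicitly
    have hfin : ∀ p : Polynomial F,
        D (p.map (algebraMap F K)) w = ((p.map (algebraMap F Ω)).eval ν) • w := by
      intro p
      induction p using Polynomial.induction_on' with
      | add p q hp hq =>
        rw [Polynomial.map_add, map_add, LinearMap.add_apply, hp, hq, Polynomial.map_add,
          Polynomial.eval_add, add_smul]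
      | monomial n a =>
        rw [Polynomial.map_monomial, ← Polynomial.C_mul_X_pow_eq_monomial, map_mul, map_pow,
          hDX, hDC, Module.End.mul_apply, pow_apply_eig (LinearMap.baseChange Ω x) hwx n,
          map_smul]
        have h1 : ψ (algebraMap F K a) = algebraMap F (Module.End Ω (Ω ⊗[F] W)) a :=
          ψ.commutes a
        rw [h1, Module.algebraMap_end_eq_smul_id, LinearMap.smul_apply, LinearMap.id_apply,
          Polynomial.map_monomial, Polynomial.eval_monomial,
          ← algebraMap_smul Ω a w, smul_smul, mul_comm]
    have hfing := hfin g
    rw [ht0, zero_smul] at ht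
    rw [ht] at hfing
    exact (smul_eq_zero.mp hfing.symm).resolve_right hw0
  -- deduce the power statement from the key claim
  have hmain : ∀ q : Polynomial F, q.Monic → Irreducible q → q ∣ x.charpoly → q = g := by
    intro q hqm hqi hqd
    have hqdeg : q.degree ≠ 0 :=
      (Polynomial.natDegree_pos_iff_degree_pos.mp hqi.natDegree_pos).ne'
    obtain ⟨ν, hν⟩ := IsAlgClosed.exists_aeval_eq_zero Ω q hqdeg
    have hν1 : (x.charpoly.map (algebraMap F Ω)).eval ν = 0 := by
      obtain ⟨r, hr⟩ := hqd
      rw [hr, Polynomial.map_mul, Polynomial.eval_mul]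
      have : (q.map (algebraMap F Ω)).eval ν = 0 := by
        rwa [Polynomial.eval_map, ← Polynomial.aeval_def]
      rw [this, zero_mul]
    have hν2 := key ν hν1
    have hνg : Polynomial.aeval ν g = 0 := by
      rwa [Polynomial.aeval_def, ← Polynomial.eval_map]
    have hνq : Polynomial.aeval ν q = 0 := hν
    have e1 : q = minpoly F ν := minpoly.eq_of_irreducible_of_monic hqi hνq hqm
    have e2 : g = minpoly F ν := minpoly.eq_of_irreducible_of_monic hgirr hνg hgmonic
    rw [e1, ← e2]
  exact monic_eq_pow_aux g hgirr x.charpoly.natDegree x.charpoly le_rfl x.charpoly_monic hmain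
end

section
/- For all integers q > 1 and N > 1 there exists a prime r such that r divides q^N − 1 but r does not divide q^m − 1 for all 0 < m < N, except when (q,N) satisfies: q = 2^i − 1 for some i and N = 2, or q = 2 and N = 6. -/
open Polynomial Finset

lemma zs_dvd_iff {r q j : ℕ} (hr : 1 < r) (hq : 0 < q) :
    r ∣ q ^ j - 1 ↔ ((q : ZMod r)) ^ j = 1 := by
  haveI : NeZero r := ⟨by omega⟩
  have h1 : 1 ≤ q ^ j := Nat.one_le_pow _ _ hq
  rw [← Nat.cast_pow, ← sub_eq_zero (b := (1 : ZMod r)), ← Nat.cast_one (R := ZMod r),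
    ← Nat.cast_sub h1, ZMod.natCast_eq_zero_iff]

lemma zs_cyclo_dvd_geom {n m : ℕ} (hn : 0 < n) (hm : m ∣ n) (hm0 : 0 < m) (hmn : m ≠ n) :
    cyclotomic n ℤ ∣ ∑ i ∈ range (n / m), ((X : ℤ[X]) ^ m) ^ i := by
  have key : (X ^ m - 1) * cyclotomic n ℤ ∣ X ^ n - 1 := by
    rw [← prod_cyclotomic_eq_X_pow_sub_one hn ℤ, ← prod_cyclotomic_eq_X_pow_sub_one hm0 ℤ]
    have hnotin : n ∉ m.divisors := by
      intro h
      exact hmn (Nat.dvd_antisymm hm (Nat.mem_divisors.mp h).1)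
    have hsub : insert n m.divisors ⊆ n.divisors := by
      intro x hx
      rcases Finset.mem_insert.mp hx with rfl | hx
      · exact Nat.mem_divisors.mpr ⟨dvd_rfl, hn.ne'⟩
      · exact Nat.mem_divisors.mpr ⟨(Nat.mem_divisors.mp hx).1.trans hm, hn.ne'⟩
    calc (∏ i ∈ m.divisors, cyclotomic i ℤ) * cyclotomic n ℤ
        = ∏ i ∈ insert n m.divisors, cyclotomic i ℤ := by
          rw [Finset.prod_insert hnotin, mul_comm]
      _ ∣ ∏ i ∈ n.divisors, cyclotomic i ℤ := Finset.prod_dvd_prod_of_subset _ _ _ hsub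
  have hgeom : (∑ i ∈ range (n / m), ((X : ℤ[X]) ^ m) ^ i) * (X ^ m - 1) = X ^ n - 1 := by
    rw [geom_sum_mul, ← pow_mul, Nat.mul_div_cancel' hm]
  have hne : (X ^ m - 1 : ℤ[X]) ≠ 0 := by
    intro h
    have := congrArg (eval 0) h
    simp [zero_pow hm0.ne'] at this
  rcases key with ⟨c, hc⟩
  refine ⟨c, mul_left_cancel₀ hne ?_⟩
  rw [← mul_assoc, ← hc, ← hgeom, mul_comm]

lemma zs_E_dvd_geom {q n m : ℕ} (hn : 0 < n) (hm : m ∣ n) (hm0 : 0 < m) (hmn : m ≠ n) :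
    (cyclotomic n ℤ).eval (q : ℤ) ∣ ∑ i ∈ range (n / m), ((q : ℤ) ^ m) ^ i := by
  have := eval_dvd (zs_cyclo_dvd_geom hn hm hm0 hmn) (x := (q : ℤ))
  simpa [eval_finset_sum] using this

lemma zs_eq_of_dvd {q n ℓ r : ℕ} (hn : 0 < n) (hℓ : ℓ.Prime) (hℓn : ℓ ∣ n)
    (hr : r.Prime) (hrE : (r : ℤ) ∣ (cyclotomic n ℤ).eval (q : ℤ))
    (hrm : (r : ℤ) ∣ (q : ℤ) ^ (n / ℓ) - 1) : r = ℓ := by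
  set m := n / ℓ with hmdef
  have hm : m ∣ n := Nat.div_dvd_of_dvd hℓn
  have hm0 : 0 < m := Nat.div_pos (Nat.le_of_dvd hn hℓn) hℓ.pos
  have hmn : m ≠ n := by
    intro h
    have h2 := Nat.div_mul_cancel hℓn
    rw [← hmdef, h] at h2
    nlinarith [hℓ.two_le, hn]
  have hnm : n / m = ℓ := Nat.div_div_self hℓn hn.ne'
  have hdvd : (r : ℤ) ∣ ∑ i ∈ range ℓ, ((q : ℤ) ^ m) ^ i := by
    rw [← hnm]
    exact hrE.trans (zs_E_dvd_geom hn hm hm0 hmn)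
  have hsub : (r : ℤ) ∣ (∑ i ∈ range ℓ, ((q : ℤ) ^ m) ^ i) - ℓ := by
    have heq : (∑ i ∈ range ℓ, ((q : ℤ) ^ m) ^ i) - ℓ
        = ∑ i ∈ range ℓ, (((q : ℤ) ^ m) ^ i - 1) := by
      rw [Finset.sum_sub_distrib]
      simp
    rw [heq]
    refine Finset.dvd_sum fun i _ => hrm.trans ?_
    simpa using sub_dvd_pow_sub_pow ((q : ℤ) ^ m) 1 i
  have hfin : (r : ℤ) ∣ (ℓ : ℤ) := by
    have := dvd_sub hdvd hsub
    simpa using this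
  exact (Nat.prime_dvd_prime_iff_eq hr hℓ).mp (Int.natCast_dvd_natCast.mp hfin)

lemma zs_sq_not_dvd {x : ℤ} {p : ℕ} (hp : p.Prime) (hodd : p ≠ 2) (hx : (p : ℤ) ∣ x - 1) :
    ¬ ((p : ℤ) ^ 2 ∣ ∑ i ∈ range p, x ^ i) := by
  obtain ⟨w, hw⟩ : ∃ w, p - 1 = 2 * w := by
    obtain ⟨t, ht⟩ := hp.odd_of_ne_two hodd
    exact ⟨t, by omega⟩
  have h3 : (∑ i ∈ range p, i) = p * w := by
    have h2 : (∑ i ∈ range p, i) * 2 = p * (p - 1) := Finset.sum_range_id_mul_two p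
    have h4 : (∑ i ∈ range p, i) * 2 = (p * w) * 2 := by rw [h2, hw]; ring
    exact Nat.eq_of_mul_eq_mul_right two_pos h4
  have hgauss : (∑ i ∈ range p, (i : ℤ)) = (p : ℤ) * w := by
    have := congrArg (fun t : ℕ => (t : ℤ)) h3
    push_cast at this
    exact this
  have hT : (p : ℤ) ∣ ∑ i ∈ range p, ∑ j ∈ range i, x ^ j := by
    have hterm : ∀ i, (p : ℤ) ∣ (∑ j ∈ range i, x ^ j) - i := by
      intro i
      have heq2 : (∑ j ∈ range i, x ^ j) - i = ∑ j ∈ range i, (x ^ j - 1) := by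
        rw [Finset.sum_sub_distrib]; simp
      rw [heq2]
      exact Finset.dvd_sum fun j _ => hx.trans (by simpa using sub_dvd_pow_sub_pow x 1 j)
    have h1 : (p : ℤ) ∣ (∑ i ∈ range p, ∑ j ∈ range i, x ^ j) - ∑ i ∈ range p, (i : ℤ) := by
      rw [← Finset.sum_sub_distrib]
      exact Finset.dvd_sum fun i _ => hterm i
    have h2 : (p : ℤ) ∣ ∑ i ∈ range p, (i : ℤ) := by
      rw [hgauss]; exact Dvd.intro w rfl
    have := dvd_add h1 h2
    simpa using this
  have hkey : (p : ℤ) ^ 2 ∣ (∑ i ∈ range p, x ^ i) - p := by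
    have heq : (∑ i ∈ range p, x ^ i) - p
        = (∑ i ∈ range p, ∑ j ∈ range i, x ^ j) * (x - 1) := by
      rw [Finset.sum_mul]
      have : ∀ i ∈ range p, (∑ j ∈ range i, x ^ j) * (x - 1) = x ^ i - 1 := fun i _ =>
        geom_sum_mul x i
      rw [Finset.sum_congr rfl this, Finset.sum_sub_distrib]
      simp [mul_comm]
    rw [heq, pow_two]
    exact mul_dvd_mul hT hx
  intro habs
  have : (p : ℤ) ^ 2 ∣ (p : ℤ) := by
    have := dvd_sub habs hkey
    simpa using this
  have hnat : p ^ 2 ∣ p := by exact_mod_cast this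
  have := Nat.le_of_dvd hp.pos hnat
  nlinarith [hp.two_le]
/-- natAbs of cyclotomic eval divides q^n - 1 -/
lemma zs_natAbs_dvd {q n : ℕ} (hq : 0 < q) (hn : 0 < n) :
    ((cyclotomic n ℤ).eval (q : ℤ)).natAbs ∣ q ^ n - 1 := by
  have hEdvd : (cyclotomic n ℤ).eval (q : ℤ) ∣ (q : ℤ) ^ n - 1 := by
    have := eval_dvd (cyclotomic.dvd_X_pow_sub_one n ℤ) (x := (q : ℤ))
    simpa using this
  have hcast : ((q ^ n - 1 : ℕ) : ℤ) = (q : ℤ) ^ n - 1 := by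
    have h1 : 1 ≤ q ^ n := Nat.one_le_pow _ _ hq
    rw [Nat.cast_sub h1]
    push_cast
    ring
  have := Int.natAbs_dvd_natAbs.mpr hEdvd
  rwa [← hcast, Int.natAbs_natCast] at this

lemma zs_step1 {q N r : ℕ} (hq : 1 < q) (hN : 1 < N) (hr : r.Prime)
    (hrΦ : r ∣ ((cyclotomic N ℤ).eval (q : ℤ)).natAbs) (hrN : ¬ r ∣ N) :
    ∃ s : ℕ, s.Prime ∧ s ∣ q ^ N - 1 ∧ ∀ m : ℕ, 0 < m → m < N → ¬ s ∣ q ^ m - 1 := by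
  haveI : Fact r.Prime := ⟨hr⟩
  haveI : NeZero ((N : ZMod r)) := NeZero.of_not_dvd (ZMod r) hrN
  have hrE : (r : ℤ) ∣ (cyclotomic N ℤ).eval (q : ℤ) :=
    (Int.natCast_dvd_natCast.mpr hrΦ).trans (Int.natAbs_dvd.mpr dvd_rfl)
  have hroot : IsRoot (cyclotomic N (ZMod r)) ((q : ℕ) : ZMod r) := by
    rw [IsRoot.def, ← map_cyclotomic_int N (ZMod r), eval_map, ← Int.cast_natCast (R := ZMod r),
      show ((((q : ℕ) : ℤ)) : ZMod r) = Int.castRingHom (ZMod r) ((q : ℕ) : ℤ) from rfl,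
      eval₂_hom, Int.coe_castRingHom, ZMod.intCast_zmod_eq_zero_iff_dvd]
    exact hrE
  have hprim : IsPrimitiveRoot ((q : ℕ) : ZMod r) N := isRoot_cyclotomic_iff.mp hroot
  have hord : N = orderOf ((q : ℕ) : ZMod r) := hprim.eq_orderOf
  refine ⟨r, hr, ?_, ?_⟩
  · rw [zs_dvd_iff hr.one_lt (by omega)]
    exact hprim.pow_eq_one
  · intro m hm0 hmN hdvd
    rw [zs_dvd_iff hr.one_lt (by omega)] at hdvd
    have h2 := orderOf_dvd_iff_pow_eq_one.mpr hdvd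
    rw [← hord] at h2
    exact absurd (Nat.le_of_dvd hm0 h2) (by omega)

/-- basic facts about a prime divisor of the cyclotomic value -/
lemma zs_facts {q N r : ℕ} (hq : 1 < q) (hN : 1 < N) (hr : r.Prime)
    (hrΦ : r ∣ ((cyclotomic N ℤ).eval (q : ℤ)).natAbs) :
    (q : ZMod r) ≠ 0 ∧ 0 < orderOf ((q : ℕ) : ZMod r) ∧ orderOf ((q : ℕ) : ZMod r) ∣ N ∧
      orderOf ((q : ℕ) : ZMod r) ∣ r - 1 ∧
      (∀ j : ℕ, r ∣ q ^ j - 1 ↔ orderOf ((q : ℕ) : ZMod r) ∣ j) := by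
  haveI : Fact r.Prime := ⟨hr⟩
  have hrqN : r ∣ q ^ N - 1 := hrΦ.trans (zs_natAbs_dvd (by omega) (by omega))
  have hiff : ∀ j : ℕ, r ∣ q ^ j - 1 ↔ orderOf ((q : ℕ) : ZMod r) ∣ j := by
    intro j
    rw [zs_dvd_iff hr.one_lt (by omega), orderOf_dvd_iff_pow_eq_one]
  have hdN : orderOf ((q : ℕ) : ZMod r) ∣ N := (hiff N).mp hrqN
  have hd0 : 0 < orderOf ((q : ℕ) : ZMod r) :=
    Nat.pos_of_ne_zero fun h => by rw [h] at hdN; omega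
  have hne : (q : ZMod r) ≠ 0 := by
    intro h0
    have h1 : ((q : ℕ) : ZMod r) ^ N = 1 := (zs_dvd_iff hr.one_lt (by omega)).mp hrqN
    rw [h0, zero_pow (by omega)] at h1
    exact zero_ne_one h1
  exact ⟨hne, hd0, hdN, ZMod.orderOf_dvd_card_sub_one hne, hiff⟩

/-- **Zsigmondy's theorem.** For all integers `q > 1` and `N > 1` there exists a prime `r`
dividing `q ^ N - 1` but not dividing `q ^ m - 1` for any `0 < m < N`, except when
`q = 2 ^ i - 1` and `N = 2`, or `q = 2` and `N = 6`. -/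
theorem stmt_3 (q N : ℕ) (hq : 1 < q) (hN : 1 < N)
    (hexc : ¬ (((∃ i : ℕ, q = 2 ^ i - 1) ∧ N = 2) ∨ (q = 2 ∧ N = 6))) :
    ∃ r : ℕ, r.Prime ∧ r ∣ q ^ N - 1 ∧ ∀ m : ℕ, 0 < m → m < N → ¬ r ∣ q ^ m - 1 := by
  by_contra hcon
  have hq0 : 0 < q := by omega
  have hN0 : 0 < N := by omega
  set E : ℤ := (cyclotomic N ℤ).eval (q : ℤ) with hEdef
  set Φ : ℕ := E.natAbs with hΦdef
  have hΦgt : q - 1 < Φ := sub_one_lt_natAbs_cyclotomic_eval hN (by omega)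
  have hΦ1 : 1 < Φ := by omega
  have hPdvdN : ∀ r : ℕ, r.Prime → r ∣ Φ → r ∣ N := by
    intro r hr hrΦ
    by_contra hrN
    exact hcon (zs_step1 hq hN hr hrΦ hrN)
  have hmax : ∀ r : ℕ, r.Prime → r ∣ Φ → ∀ ℓ : ℕ, ℓ.Prime → ℓ ∣ N → ℓ ≠ r →
      ℓ ∣ orderOf ((q : ℕ) : ZMod r) ∧ ℓ < r := by
    intro r hr hrΦ ℓ hℓ hℓN hne
    obtain ⟨hne0, hd0, hdN, hdr1, hiff⟩ := zs_facts hq hN hr hrΦ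
    set d := orderOf ((q : ℕ) : ZMod r) with hddef
    have hℓd : ℓ ∣ d := by
      by_contra hℓd
      have hcop : Nat.Coprime d ℓ := ((hℓ.coprime_iff_not_dvd).mpr hℓd).symm
      have hdm : d ∣ N / ℓ := by
        have h1 : d ∣ (N / ℓ) * ℓ := by rw [Nat.div_mul_cancel hℓN]; exact hdN
        exact hcop.dvd_of_dvd_mul_right h1
      have hrm : r ∣ q ^ (N / ℓ) - 1 := (hiff _).mpr hdm
      have hrmZ : (r : ℤ) ∣ (q : ℤ) ^ (N / ℓ) - 1 := by
        have hcast : ((q ^ (N / ℓ) - 1 : ℕ) : ℤ) = (q : ℤ) ^ (N / ℓ) - 1 := by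
          rw [Nat.cast_sub (Nat.one_le_pow _ _ hq0)]; push_cast; ring
        rw [← hcast]
        exact Int.natCast_dvd_natCast.mpr hrm
      have hrE : (r : ℤ) ∣ E := (Int.natCast_dvd_natCast.mpr hrΦ).trans (Int.natAbs_dvd.mpr dvd_rfl)
      exact hne (zs_eq_of_dvd hN0 hℓ hℓN hr hrE hrmZ).symm
    have hℓr1 : ℓ ∣ r - 1 := hℓd.trans hdr1
    have hr1 : 0 < r - 1 := by have := hr.two_le; omega
    exact ⟨hℓd, by have := Nat.le_of_dvd hr1 hℓr1; omega⟩
  -- unique prime divisor p of Φ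
  set p := Φ.minFac with hpdef
  have hp : p.Prime := Nat.minFac_prime (by omega)
  have hpΦ : p ∣ Φ := Nat.minFac_dvd Φ
  have hunique : ∀ {s : ℕ}, s.Prime → s ∣ Φ → s = p := by
    intro s hs hsΦ
    by_contra hsp
    have h1 := (hmax p hp hpΦ s hs (hPdvdN s hs hsΦ) hsp).2
    have h2 := (hmax s hs hsΦ p hp (hPdvdN p hp hpΦ) (Ne.symm hsp)).2
    omega
  have hΦpow : Φ = p ^ Φ.primeFactorsList.length :=
    Nat.eq_prime_pow_of_unique_prime_dvd (by omega) hunique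
  set e := Φ.primeFactorsList.length with hedef
  have he1 : 1 ≤ e := by
    rcases Nat.eq_zero_or_pos e with h | h
    · rw [h, pow_zero] at hΦpow; omega
    · exact h
  obtain ⟨hne0, hd0, hdN, hdr1, hiff⟩ := zs_facts hq hN hp hpΦ
  set d := orderOf ((q : ℕ) : ZMod p) with hddef
  have hpN : p ∣ N := hPdvdN p hp hpΦ
  have hrE : (p : ℤ) ∣ E := (Int.natCast_dvd_natCast.mpr hpΦ).trans (Int.natAbs_dvd.mpr dvd_rfl)
  have hp2le := hp.two_le
  by_cases hp2 : p = 2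
  · -- p = 2 branch : N is a power of two
    have hall2 : ∀ {s : ℕ}, s.Prime → s ∣ N → s = 2 := by
      intro s hs hsN
      by_contra hs2
      have h1 := (hmax p hp hpΦ s hs hsN (by rw [hp2]; exact hs2)).2
      rw [hp2] at h1
      have := hs.two_le
      omega
    have hNpow : N = 2 ^ N.primeFactorsList.length :=
      Nat.eq_prime_pow_of_unique_prime_dvd (by omega) hall2
    set k := N.primeFactorsList.length with hkdef
    have hk1 : 1 ≤ k := by
      rcases Nat.eq_zero_or_pos k with h | h
      · rw [h, pow_zero] at hNpow; omega
      · exact h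
    have hqodd : ¬ 2 ∣ q := by
      intro h2q
      have h1 : p ∣ q ^ N - 1 := hpΦ.trans (zs_natAbs_dvd hq0 hN0)
      rw [hp2] at h1
      have h2 : 2 ∣ q ^ N := h2q.trans (dvd_pow_self q hN0.ne')
      have h3 : 1 ≤ q ^ N := Nat.one_le_pow _ _ hq0
      omega
    by_cases hk : k = 1
    · -- N = 2 : exceptional case
      have hN2 : N = 2 := by rw [hNpow, hk, pow_one]
      have hE2 : E = (q : ℤ) + 1 := by
        rw [hEdef, hN2, cyclotomic_two, eval_add, eval_X, eval_one]
      have hΦ2 : Φ = q + 1 := by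
        rw [hΦdef, hE2]
        have hc : ((q : ℤ) + 1) = ((q + 1 : ℕ) : ℤ) := by push_cast; ring
        rw [hc]
        exact Int.natAbs_natCast _
      have hqval : q = 2 ^ e - 1 := by
        have h5 := hΦpow
        rw [hΦ2, hp2] at h5
        omega
      exact hexc (Or.inl ⟨⟨e, hqval⟩, hN2⟩)
    · -- k ≥ 2
      have hk2 : 2 ≤ k := by omega
      have h4N : 4 ∣ N := by
        rw [hNpow]
        have h5 : (2:ℕ) ^ 2 ∣ 2 ^ k := pow_dvd_pow 2 hk2
        simpa using h5
      have h2N : 2 ∣ N := dvd_trans (by norm_num) h4N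
      by_cases he : e = 1
      · -- Φ = 2, impossible
        have hΦeq : Φ = 2 := by rw [hΦpow, he, pow_one, hp2]
        have hq3 : 3 ≤ q := by omega
        have htot := sub_one_pow_totient_lt_natAbs_cyclotomic_eval hN (show q ≠ 1 by omega)
        rw [← hEdef, ← hΦdef, hΦeq] at htot
        have hφ : 0 < N.totient := Nat.totient_pos.mpr hN0
        have h6 : 2 ≤ (q - 1) ^ N.totient :=
          le_trans (by omega) (Nat.le_self_pow hφ.ne' _)
        omega
      · -- e ≥ 2 : 4 ∣ Φ ∣ 1 + q^(N/2), contradiction mod 4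
        have he2 : 2 ≤ e := by omega
        have h4Φ : (2:ℕ) ^ 2 ∣ Φ := by
          rw [hΦpow, hp2]; exact pow_dvd_pow 2 he2
        have h4E : (4 : ℤ) ∣ E := by
          have h1 : ((2 ^ 2 : ℕ) : ℤ) ∣ (Φ : ℤ) := Int.natCast_dvd_natCast.mpr h4Φ
          have h2 : (Φ : ℤ) ∣ E := Int.natAbs_dvd.mpr dvd_rfl
          have h3 := h1.trans h2
          norm_num at h3
          exact h3
        have hm0 : 0 < N / 2 := Nat.div_pos (by omega) (by norm_num)
        have hmdvd : N / 2 ∣ N := Nat.div_dvd_of_dvd h2N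
        have hmN : N / 2 ≠ N := by omega
        have hnm : N / (N / 2) = 2 := Nat.div_div_self h2N hN0.ne'
        have hS : E ∣ ∑ i ∈ range 2, ((q:ℤ) ^ (N / 2)) ^ i := by
          have h := zs_E_dvd_geom (q := q) hN0 hmdvd hm0 hmN
          rwa [hnm] at h
        have hSval : (∑ i ∈ range 2, ((q:ℤ) ^ (N / 2)) ^ i) = 1 + (q:ℤ) ^ (N / 2) := by
          rw [Finset.sum_range_succ, Finset.sum_range_one]
          ring
        have h4S : (4 : ℤ) ∣ 1 + (q:ℤ) ^ (N / 2) := by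
          rw [← hSval]
          exact h4E.trans hS
        obtain ⟨t, ht⟩ := h4N
        have hx : (q:ℤ) ^ (N / 2) = ((q:ℤ) ^ t) ^ 2 := by
          rw [← pow_mul]
          congr 1
          omega
        have hqoddZ : Odd ((q:ℤ) ^ t) := by
          refine Odd.pow ?_
          rw [Int.odd_iff]
          omega
        obtain ⟨s, hs⟩ := hqoddZ
        rw [hx, hs] at h4S
        have hcontra : (2*s+1)^2 + 1 = 4*(s*s+s) + 2 := by ring
        omega
  · -- p odd branch
    have hp3 : 3 ≤ p := by omega
    have hdp1 : d ≤ p - 1 := Nat.le_of_dvd (by omega) hdr1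
    have hpd : ¬ p ∣ d := fun h => by have := Nat.le_of_dvd hd0 h; omega
    have hcop : Nat.Coprime d p := ((hp.coprime_iff_not_dvd).mpr hpd).symm
    have hdm : d ∣ N / p := by
      have h1 : d ∣ (N / p) * p := by rw [Nat.div_mul_cancel hpN]; exact hdN
      exact hcop.dvd_of_dvd_mul_right h1
    have hpm : (p:ℤ) ∣ (q:ℤ) ^ (N / p) - 1 := by
      have hrm : p ∣ q ^ (N / p) - 1 := (hiff _).mpr hdm
      have hcast : ((q ^ (N / p) - 1 : ℕ) : ℤ) = (q : ℤ) ^ (N / p) - 1 := by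
        rw [Nat.cast_sub (Nat.one_le_pow _ _ hq0)]; push_cast; ring
      rw [← hcast]
      exact Int.natCast_dvd_natCast.mpr hrm
    have hnm : N / (N / p) = p := Nat.div_div_self hpN hN0.ne'
    have hmdvd : N / p ∣ N := Nat.div_dvd_of_dvd hpN
    have hm0 : 0 < N / p := Nat.div_pos (Nat.le_of_dvd hN0 hpN) hp.pos
    have hmN : N / p ≠ N := by
      intro h
      have h2 := Nat.div_mul_cancel hpN
      rw [h] at h2
      nlinarith
    have hS : E ∣ ∑ i ∈ range p, ((q:ℤ) ^ (N / p)) ^ i := by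
      have h := zs_E_dvd_geom (q := q) hN0 hmdvd hm0 hmN
      rwa [hnm] at h
    have hsq := zs_sq_not_dvd hp hp2 hpm
    have he : e = 1 := by
      by_contra he'
      have he2 : 2 ≤ e := by omega
      have h1 : p ^ 2 ∣ Φ := by rw [hΦpow]; exact pow_dvd_pow p he2
      have h2 : ((p:ℤ)) ^ 2 ∣ E := by
        have h3 : ((p ^ 2 : ℕ) : ℤ) ∣ (Φ : ℤ) := Int.natCast_dvd_natCast.mpr h1
        have h4 : (Φ : ℤ) ∣ E := Int.natAbs_dvd.mpr dvd_rfl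
        have h5 := h3.trans h4
        push_cast at h5
        exact h5
      exact hsq (h2.trans hS)
    have hΦp : Φ = p := by rw [hΦpow, he, pow_one]
    have hφp : p - 1 ≤ N.totient := by
      have h1 : (p - 1) ∣ N.totient := by
        rw [← Nat.totient_prime hp]
        exact Nat.totient_dvd_of_dvd hpN
      exact Nat.le_of_dvd (Nat.totient_pos.mpr hN0) h1
    have hlt : (q - 1) ^ N.totient < p := by
      have h1 := sub_one_pow_totient_lt_natAbs_cyclotomic_eval hN (show q ≠ 1 by omega)
      rw [← hEdef, ← hΦdef, hΦp] at h1
      exact h1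
    have hple : p ≤ 2 ^ (p - 1) := by
      have := Nat.lt_two_pow_self (n := p - 1)
      omega
    by_cases hq2 : q = 2
    · -- q = 2 endgame
      subst hq2
      have hd2 : 2 ≤ d := by
        by_contra h
        push_neg at h
        have hd1 : d = 1 := by omega
        have h1 : p ∣ 2 ^ 1 - 1 := (hiff 1).mpr (by rw [hd1])
        norm_num at h1
        omega
      have hpd2 : p ∣ 2 ^ d - 1 := (hiff d).mpr dvd_rfl
      have h2d1 : 2 ≤ 2 ^ d := by
        calc (2:ℕ) = 2 ^ 1 := (pow_one 2).symm
        _ ≤ 2 ^ d := Nat.pow_le_pow_right (by norm_num) (by omega)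
      have hple2 : p ≤ 2 ^ d - 1 := Nat.le_of_dvd (by omega) hpd2
      by_cases hsf : ∃ ℓ : ℕ, ℓ.Prime ∧ ℓ * ℓ ∣ N
      · -- N not squarefree
        obtain ⟨ℓ, hℓ, hℓ2N⟩ := hsf
        have hℓN : ℓ ∣ N := (dvd_mul_right ℓ ℓ).trans hℓ2N
        have hMℓ : ℓ ∣ N / ℓ := (Nat.dvd_div_iff_mul_dvd hℓN).mpr hℓ2N
        have hMN : (N / ℓ) * ℓ = N := Nat.div_mul_cancel hℓN
        have hexp : E = (cyclotomic (N / ℓ) ℤ).eval ((2:ℤ) ^ ℓ) := by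
          have hcyc : cyclotomic N ℤ = expand ℤ ℓ (cyclotomic (N / ℓ) ℤ) := by
            rw [cyclotomic_expand_eq_cyclotomic hℓ hMℓ ℤ, hMN]
          rw [hEdef, hcyc, expand_eval]
          norm_num
        have hpM : p ∣ N / ℓ := by
          by_cases hlp : ℓ = p
          · subst hlp
            exact (Nat.dvd_div_iff_mul_dvd hℓN).mpr hℓ2N
          · have hcop2 : Nat.Coprime p ℓ := (Nat.coprime_primes hp hℓ).mpr (Ne.symm hlp)
            have h1 : p ∣ (N / ℓ) * ℓ := by rw [hMN]; exact hpN
            exact hcop2.dvd_of_dvd_mul_right h1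
        have hMpos : 0 < N / ℓ := Nat.div_pos (Nat.le_of_dvd hN0 hℓN) hℓ.pos
        have hM1 : 1 < N / ℓ := lt_of_lt_of_le (show 1 < p by omega) (Nat.le_of_dvd hMpos hpM)
        have h4ℓ : 4 ≤ 2 ^ ℓ := by
          calc (4:ℕ) = 2 ^ 2 := by norm_num
          _ ≤ 2 ^ ℓ := Nat.pow_le_pow_right (by norm_num) hℓ.two_le
        have hbound := sub_one_pow_totient_lt_natAbs_cyclotomic_eval
          (n := N / ℓ) (q := 2 ^ ℓ) hM1 (by omega)
        have hcast2 : (((2:ℕ) ^ ℓ : ℕ) : ℤ) = (2:ℤ) ^ ℓ := by push_cast; ring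
        rw [hcast2, ← hexp, ← hΦdef, hΦp] at hbound
        have hφM : p - 1 ≤ (N / ℓ).totient := by
          have h1 : (p - 1) ∣ (N / ℓ).totient := by
            rw [← Nat.totient_prime hp]
            exact Nat.totient_dvd_of_dvd hpM
          exact Nat.le_of_dvd (Nat.totient_pos.mpr hMpos) h1
        have h5 : 2 ^ (p - 1) ≤ (2 ^ ℓ - 1) ^ (N / ℓ).totient :=
          le_trans (Nat.pow_le_pow_right (by norm_num) hφM) (Nat.pow_le_pow_left (by omega) _)
        omega
      · -- N squarefree
        push_neg at hsf
        have hsfN : Squarefree N := Nat.squarefree_iff_prime_squarefree.mpr hsf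
        have hpm' : ¬ p ∣ N / p := by
          intro h
          exact hsf p hp ((Nat.dvd_div_iff_mul_dvd hpN).mp h)
        have hsfm : Squarefree (N / p) := hsfN.squarefree_of_dvd hmdvd
        have hmd : N / p ∣ d := by
          rw [← Nat.factorization_le_iff_dvd hm0.ne' hd0.ne', Finsupp.le_def]
          intro ℓ
          by_cases hℓpr : ℓ.Prime
          · by_cases hℓm : ℓ ∣ N / p
            · have h1 : (N / p).factorization ℓ ≤ 1 := hsfm.natFactorization_le_one ℓ
              have hℓN : ℓ ∣ N := hℓm.trans hmdvd
              have hℓp : ℓ ≠ p := by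
                rintro rfl
                exact hpm' hℓm
              have hℓd : ℓ ∣ d := (hmax p hp hpΦ ℓ hℓpr hℓN hℓp).1
              have h2 : 0 < d.factorization ℓ := hℓpr.factorization_pos_of_dvd hd0.ne' hℓd
              omega
            · rw [Nat.factorization_eq_zero_of_not_dvd hℓm]
              exact Nat.zero_le _
          · rw [Nat.factorization_eq_zero_of_not_prime _ hℓpr]
            exact Nat.zero_le _
        have hdmeq : d = N / p := Nat.dvd_antisymm hdm hmd
        have hNpd : d * p = N := by rw [hdmeq]; exact Nat.div_mul_cancel hpN
        have hexp2 := cyclotomic_expand_eq_cyclotomic_mul hp hpd ℤ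
        have heval : (cyclotomic d ℤ).eval ((2:ℤ) ^ p) = E * (cyclotomic d ℤ).eval (2:ℤ) := by
          have h1 := congrArg (eval (2:ℤ)) hexp2
          rw [expand_eval, eval_mul] at h1
          rw [h1, hEdef, hNpd]
          norm_num
        have hD : ((cyclotomic d ℤ).eval (2:ℤ)).natAbs ∣ 2 ^ d - 1 := by
          have h1 := zs_natAbs_dvd (q := 2) (n := d) (by norm_num) hd0
          simpa using h1
        have hDle : ((cyclotomic d ℤ).eval (2:ℤ)).natAbs ≤ 2 ^ d - 1 :=
          Nat.le_of_dvd (by omega) hD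
        have hnatAbs : ((cyclotomic d ℤ).eval ((2:ℤ) ^ p)).natAbs
            = p * ((cyclotomic d ℤ).eval (2:ℤ)).natAbs := by
          rw [heval, Int.natAbs_mul, ← hΦdef, hΦp]
        have h2p1 : 2 ≤ 2 ^ p := by
          calc (2:ℕ) = 2 ^ 1 := (pow_one 2).symm
          _ ≤ 2 ^ p := Nat.pow_le_pow_right (by norm_num) (by omega)
        have hbd := sub_one_pow_totient_lt_natAbs_cyclotomic_eval
          (n := d) (q := 2 ^ p) (by omega) (by omega)
        have hcast3 : (((2:ℕ) ^ p : ℕ) : ℤ) = (2:ℤ) ^ p := by push_cast; ring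
        rw [hcast3, hnatAbs] at hbd
        by_cases hd3 : d = 2
        · -- p = 3, N = 6 : exceptional case
          have h31 : p ∣ 3 := by
            rw [hd3] at hpd2
            norm_num at hpd2
            exact hpd2
          have hp3' : p = 3 := (Nat.prime_dvd_prime_iff_eq hp (by norm_num)).mp h31
          have hN6 : N = 6 := by rw [← hNpd, hd3, hp3']
          exact hexc (Or.inr ⟨rfl, hN6⟩)
        · have hd3' : 3 ≤ d := by omega
          have hφd : 2 ≤ d.totient := by
            have h1 := Nat.totient_even (show 2 < d by omega)
            have h2 : 0 < d.totient := Nat.totient_pos.mpr (by omega)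
            rcases h1 with ⟨w, hw⟩
            omega
          have hdp : d < p := by omega
          have h2dp : 2 ^ d - 1 < 2 ^ p - 1 := by
            have := Nat.pow_lt_pow_right (a := 2) (by norm_num) hdp
            omega
          have h1 : (2 ^ p - 1) ^ 2 ≤ (2 ^ p - 1) ^ d.totient :=
            Nat.pow_le_pow_right (by omega) hφd
          have hchain : (2 ^ p - 1) ^ 2 < (2 ^ p - 1) ^ 2 := by
            calc (2 ^ p - 1) ^ 2 ≤ (2 ^ p - 1) ^ d.totient := h1
            _ < p * ((cyclotomic d ℤ).eval (2:ℤ)).natAbs := hbd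
            _ ≤ (2 ^ d - 1) * (2 ^ d - 1) := Nat.mul_le_mul hple2 hDle
            _ < (2 ^ p - 1) * (2 ^ p - 1) := Nat.mul_lt_mul'' h2dp h2dp
            _ = (2 ^ p - 1) ^ 2 := (sq _).symm
          omega
    · -- q ≥ 3 endgame
      have hq3 : 3 ≤ q := by omega
      have h2 : 2 ^ (p - 1) ≤ (q - 1) ^ N.totient :=
        le_trans (Nat.pow_le_pow_right (by norm_num) hφp) (Nat.pow_le_pow_left (by omega) _)
      omega
end

section
/- Let α generate F_{64}^× and let Ψ : F_{64}^× → C^× be a character (viewing F_{64} as a degree-3 extension of F_4). If Ψ(α) + Ψ(α^4) + Ψ(α^{16}) = 0, then Ψ has order 9. -/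
/-!
Since `α` generates the cyclic group `𝔽₆₄ˣ`, the order of `Ψ` is that of `ζ = Ψ(α)`, a 63rd root
of unity. Dividing the hypothesis by `ζ` and putting `w = ζ³` gives `1 + w + w⁵ = 0`, and
`X⁵ + X + 1 = (X² + X + 1)(X³ - X² + 1)`. The cubic factor has no root on the unit circle
(conjugating `w³ - w² + 1 = 0` gives `w³ - w + 1 = 0`, whence `w = 1`), so `w` is a primitive
cube root of unity and `ζ` has order 9.
-/

theorem MonoidHom.orderOf_eq_orderOf_apply_of_forall_mem_zpowers {G M : Type*} [Group G]
    [CommGroup M] (f : G →* M) {g : G} (hg : ∀ x, x ∈ Subgroup.zpowers g) :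
    orderOf f = orderOf (f g) := by
  refine orderOf_eq_orderOf_iff.mpr fun n => ⟨fun hn => by simpa using DFunLike.congr_fun hn g,
    fun hn => ?_⟩
  ext x
  obtain ⟨k, rfl⟩ := hg x
  rw [map_zpow, MonoidHom.pow_apply, hn, one_zpow, MonoidHom.one_apply]

theorem forall_mem_zpowers_of_orderOf_eq_card {G : Type*} [Group G] [Finite G] {g : G}
    (hg : orderOf g = Nat.card G) (x : G) : x ∈ Subgroup.zpowers g := by
  rw [Subgroup.eq_top_of_card_eq (Subgroup.zpowers g) (by rw [Nat.card_zpowers, hg])]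
  trivial

theorem Complex.pow_three_sub_sq_add_one_ne_zero {w : ℂ} (hw : ‖w‖ = 1) :
    w ^ 3 - w ^ 2 + 1 ≠ 0 := by
  intro h
  have hw0 : w ≠ 0 := norm_ne_zero_iff.mp (by rw [hw]; exact one_ne_zero)
  have hconj : w⁻¹ ^ 3 - w⁻¹ ^ 2 + 1 = 0 := by
    simpa [Complex.inv_eq_conj hw] using congrArg (starRingEnd ℂ) h
  have hrev : w ^ 3 - w + 1 = 0 := by
    field_simp at hconj
    linear_combination hconj
  have hw1 : w = 1 := by
    have : w * (1 - w) = 0 := by linear_combination h - hrev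
    exact (sub_eq_zero.mp ((mul_eq_zero.mp this).resolve_left hw0)).symm
  simp [hw1] at h

theorem Complex.sq_add_self_add_one_eq_zero_of_one_add_self_add_pow_five_eq_zero {w : ℂ}
    (hw : ‖w‖ = 1) (h : 1 + w + w ^ 5 = 0) : w ^ 2 + w + 1 = 0 := by
  have hfac : (w ^ 2 + w + 1) * (w ^ 3 - w ^ 2 + 1) = 0 := by linear_combination h
  exact (mul_eq_zero.mp hfac).resolve_right (pow_three_sub_sq_add_one_ne_zero hw)

theorem orderOf_eq_nine_of_pow_six_add_pow_three_add_one_eq_zero {R : Type*} [CommRing R]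
    {z : R} (h3 : (3 : R) ≠ 0) (hz : z ^ 6 + z ^ 3 + 1 = 0) : orderOf z = 9 := by
  refine orderOf_eq_prime_pow (p := 3) (n := 1) (fun hz3 => h3 ?_) ?_
  · linear_combination hz - (z ^ 3 + 2) * hz3
  · linear_combination (z ^ 3 - 1) * hz

/-- Let `α` be a generator of `𝔽₆₄ˣ` and `Ψ : 𝔽₆₄ˣ → ℂˣ` a character.
If `Ψ(α) + Ψ(α^4) + Ψ(α^16) = 0` then `Ψ` has order 9. -/
theorem stmt_7 (α : (GaloisField 2 6)ˣ) (hα : orderOf α = 63)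
    (Ψ : (GaloisField 2 6)ˣ →* ℂˣ)
    (h : ((Ψ α : ℂ) + (Ψ (α ^ 4) : ℂ) + (Ψ (α ^ 16) : ℂ)) = 0) :
    orderOf Ψ = 9 := by
  have hcard : Nat.card (GaloisField 2 6)ˣ = 63 := by
    rw [Nat.card_units, GaloisField.card 2 6 (by norm_num)]
    norm_num
  rw [Ψ.orderOf_eq_orderOf_apply_of_forall_mem_zpowers
    (forall_mem_zpowers_of_orderOf_eq_card (hα.trans hcard.symm)), ← orderOf_units]
  set ζ : ℂ := (Ψ α : ℂ)
  have hζ63 : ζ ^ 63 = 1 := by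
    rw [← Units.val_pow_eq_pow_val, ← map_pow, ← hα, pow_orderOf_eq_one, map_one, Units.val_one]
  have hw : ‖ζ ^ 3‖ = 1 :=
    Complex.norm_eq_one_of_pow_eq_one (n := 21) (by rw [← pow_mul, hζ63]) (by norm_num)
  have hζw : ζ * (1 + ζ ^ 3 + (ζ ^ 3) ^ 5) = 0 := by
    simp only [map_pow, Units.val_pow_eq_pow_val] at h
    linear_combination h
  have hcube := Complex.sq_add_self_add_one_eq_zero_of_one_add_self_add_pow_five_eq_zero hw
    ((mul_eq_zero.mp hζw).resolve_left (Ψ α).ne_zero)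
  exact orderOf_eq_nine_of_pow_six_add_pow_three_add_one_eq_zero three_ne_zero
    (by linear_combination hcube)
end

section
/- Let Γ be a finite group, H ≤ Γ, σ an irreducible complex representation of Γ, and U ≤ Γ a subgroup with U ∩ H = {1}. If there exists an irreducible representation ξ of H such that Ind_H^Γ ξ is isomorphic to a direct sum of copies of σ, then σ restricted to U contains the trivial representation of U. -/
/-- The space of the representation of `Γ` induced from a representation `ρ` of a
subgroup `H`: functions `f : Γ → V` with `f (h * x) = ρ h (f x)` for `h ∈ H`. -/
def indCarrierFull {Γ : Type} [Group Γ] (H : Subgroup Γ)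
    {V : Type} [AddCommGroup V] [Module ℂ V] (ρ : Representation ℂ H V) :
    Submodule ℂ (Γ → V) where
  carrier := {f | ∀ (h : H) (x : Γ), f ((h : Γ) * x) = ρ h (f x)}
  add_mem' := by
    intro f g hf hg h x
    simp [hf h x, hg h x]
  zero_mem' := by intro h x; simp
  smul_mem' := by
    intro c f hf h x
    simp [hf h x]

/-- The induced representation `Ind_H^Γ ρ`, acting by right translation. -/
def indRepFull {Γ : Type} [Group Γ] (H : Subgroup Γ)
    {V : Type} [AddCommGroup V] [Module ℂ V] (ρ : Representation ℂ H V) :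
    Representation ℂ Γ (indCarrierFull H ρ) where
  toFun g :=
    { toFun := fun f => ⟨fun x => (f : Γ → V) (x * g), by
        intro h x
        simpa [mul_assoc] using f.2 h (x * g)⟩
      map_add' := by intro f g'; apply Subtype.ext; funext x; simp
      map_smul' := by intro c f; apply Subtype.ext; funext x; simp }
  map_one' := by
    apply LinearMap.ext; intro f; apply Subtype.ext; funext x; simp
  map_mul' := by
    intro g g'; apply LinearMap.ext; intro f; apply Subtype.ext; funext x
    simp [mul_assoc]

/-!
The `U`-average of the function `δ_w` supported on `H` with `δ_w(h) = ξ(h) w` is a `U`-fixed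
vector of `Ind_H^Γ ξ`. Its value at `1` is `∑_{u ∈ U} δ_w(u) = δ_w(1) = w ≠ 0`, since
`U ∩ H = 1`. Transporting it along `Ind_H^Γ ξ ≅ σ^k`, some coordinate is a nonzero `U`-fixed
vector of `σ`.
-/

namespace Representation

variable {G X : Type} [Group G] [AddCommGroup X] [Module ℂ X]

theorem apply_sum_subgroup_apply_of_mem (ρ : Representation ℂ G X) (U : Subgroup G) [Fintype U]
    (x : X) {u : G} (hu : u ∈ U) : ρ u (∑ v : U, ρ v x) = ∑ v : U, ρ v x := by
  rw [map_sum]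
  exact Fintype.sum_equiv (Equiv.mulLeft (⟨u, hu⟩ : U)) _ _ fun v => by
    simp [← Module.End.mul_apply]

theorem exists_ne_zero_fixed_of_equivariant {V ι : Type} [AddCommGroup V] [Module ℂ V]
    (ρ : Representation ℂ G X) (σ : Representation ℂ G V) (e : X →ₗ[ℂ] ι → V)
    (he_inj : Function.Injective e) (he : ∀ (g : G) (x : X) (i : ι), e (ρ g x) i = σ g (e x i))
    (U : Subgroup G) {x : X} (hx : x ≠ 0) (hfix : ∀ u ∈ U, ρ u x = x) :
    ∃ v : V, v ≠ 0 ∧ ∀ u ∈ U, σ u v = v := by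
  obtain ⟨i, hi⟩ := Function.ne_iff.mp ((map_ne_zero_iff e he_inj).mpr hx)
  exact ⟨e x i, hi, fun u hu => by rw [← he, hfix u hu]⟩

end Representation

section Induction

variable {Γ W : Type} [Group Γ] [AddCommGroup W] [Module ℂ W]

open Classical in
noncomputable def indDelta (H : Subgroup Γ) (ξ : Representation ℂ H W) (w : W) :
    indCarrierFull H ξ :=
  ⟨fun x => if hx : x ∈ H then ξ ⟨x, hx⟩ w else 0, by
    intro h x
    by_cases hx : x ∈ H
    · have hhx : (h : Γ) * x ∈ H := H.mul_mem h.2 hx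
      simp only [dif_pos hx, dif_pos hhx, ← Module.End.mul_apply, ← map_mul]
      rfl
    · have hhx : (h : Γ) * x ∉ H := fun hc => hx (by simpa using H.mul_mem (H.inv_mem h.2) hc)
      simp [dif_neg hx, dif_neg hhx]⟩

theorem indDelta_apply_one (H : Subgroup Γ) (ξ : Representation ℂ H W) (w : W) :
    (indDelta H ξ w : Γ → W) 1 = w := by
  simp only [indDelta, H.one_mem, dite_true]
  exact LinearMap.congr_fun (map_one ξ) w

theorem indDelta_apply_of_notMem (H : Subgroup Γ) (ξ : Representation ℂ H W) (w : W) {x : Γ}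
    (hx : x ∉ H) : (indDelta H ξ w : Γ → W) x = 0 := by
  simp [indDelta, hx]

theorem exists_ne_zero_fixed_indRepFull [Nontrivial W] (H U : Subgroup Γ) [Fintype U]
    (hHU : ∀ x : Γ, x ∈ U → x ∈ H → x = 1) (ξ : Representation ℂ H W) :
    ∃ F : indCarrierFull H ξ, F ≠ 0 ∧ ∀ u ∈ U, indRepFull H ξ u F = F := by
  obtain ⟨w, hw⟩ := exists_ne (0 : W)
  set F := ∑ v : U, indRepFull H ξ v (indDelta H ξ w)
  refine ⟨F, fun hF => hw ?_, fun u hu =>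
    (indRepFull H ξ).apply_sum_subgroup_apply_of_mem U _ hu⟩
  have hF1 : (F : Γ → W) 1 = ∑ v : U, (indDelta H ξ w : Γ → W) v := by
    simp [F, indRepFull]
  calc w = (indDelta H ξ w : Γ → W) 1 := (indDelta_apply_one H ξ w).symm
    _ = ∑ v : U, (indDelta H ξ w : Γ → W) v := by
      refine (Fintype.sum_eq_single (f := fun v : U => (indDelta H ξ w : Γ → W) v) 1
        fun v hv => ?_).symm
      exact indDelta_apply_of_notMem H ξ w fun hvH => hv (Subtype.ext (hHU v v.2 hvH))
    _ = 0 := by rw [← hF1, hF]; rfl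

end Induction

theorem stmt_9_general {Γ V W : Type} [Group Γ] [Fintype Γ]
    [AddCommGroup V] [Module ℂ V] [AddCommGroup W] [Module ℂ W]
    (H U : Subgroup Γ) (hHU : ∀ x : Γ, x ∈ U → x ∈ H → x = 1)
    (σ : Representation ℂ Γ V)
    (ξ : Representation ℂ H W)
    (hξ : Nontrivial W ∧
      ∀ S : Submodule ℂ W, (∀ (h : H) (w : W), w ∈ S → ξ h w ∈ S) → S = ⊥ ∨ S = ⊤)
    (k : ℕ)
    (hiso : ∃ e : (indCarrierFull H ξ) ≃ₗ[ℂ] (Fin k → V),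
        ∀ (g : Γ) (f : indCarrierFull H ξ) (i : Fin k),
          e (indRepFull H ξ g f) i = σ g (e f i)) :
    ∃ v : V, v ≠ 0 ∧ ∀ u ∈ U, σ u v = v := by
  classical
  haveI : Nontrivial W := hξ.1
  obtain ⟨e, he⟩ := hiso
  obtain ⟨F, hF, hfix⟩ := exists_ne_zero_fixed_indRepFull H U hHU ξ
  exact Representation.exists_ne_zero_fixed_of_equivariant _ σ e.toLinearMap e.injective he U
    hF hfix

/-- Let `Γ` be a finite group, `H, U ≤ Γ` with `U ∩ H = 1`, `σ` an irreducible complex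
representation of `Γ` and `ξ` an irreducible representation of `H`. If `Ind_H^Γ ξ` is
isomorphic to a direct sum of copies of `σ`, then the restriction of `σ` to `U` contains
the trivial representation, i.e. there is a nonzero `U`-fixed vector. -/
theorem stmt_9 {Γ V W : Type} [Group Γ] [Fintype Γ]
    [AddCommGroup V] [Module ℂ V] [AddCommGroup W] [Module ℂ W]
    (H U : Subgroup Γ) (hHU : ∀ x : Γ, x ∈ U → x ∈ H → x = 1)
    (σ : Representation ℂ Γ V)
    (hσ : Nontrivial V ∧
      ∀ S : Submodule ℂ V, (∀ (g : Γ) (v : V), v ∈ S → σ g v ∈ S) → S = ⊥ ∨ S = ⊤)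
    (ξ : Representation ℂ H W)
    (hξ : Nontrivial W ∧
      ∀ S : Submodule ℂ W, (∀ (h : H) (w : W), w ∈ S → ξ h w ∈ S) → S = ⊥ ∨ S = ⊤)
    (k : ℕ)
    (hiso : ∃ e : (indCarrierFull H ξ) ≃ₗ[ℂ] (Fin k → V),
        ∀ (g : Γ) (f : indCarrierFull H ξ) (i : Fin k),
          e (indRepFull H ξ g f) i = σ g (e f i)) :
    ∃ v : V, v ≠ 0 ∧ ∀ u ∈ U, σ u v = v :=
  stmt_9_general H U hHU σ ξ hξ k hiso
end

section
/- Let q ≥ 2, N ≥ 2 with gcd(q,N) not constrained. Suppose a, N > 1 with gcd(a, N) = 1. Then GL_N(F_q), embedded in GL_N(F_{q^a}) via the natural inclusion F_q ⊆ F_{q^a}, is a sufficiently small subgroup of GL_N(F_{q^a}): for every h ∈ GL_N(F_q) whose characteristic polynomial over F_{q^a} is a power of an irreducible polynomial, the roots of that polynomial lie in F_{q^N}, and F_{q^N} ∩ F_{q^{aN}} viewed inside F_{q^{aN}} is a proper subfield. -/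
open Polynomial IntermediateField

private lemma fix_pow_aux {M : Type*} [Monoid M] (x : M) (c : ℕ) (h : x ^ c = x) :
    ∀ k : ℕ, x ^ c ^ k = x := by
  intro k
  induction k with
  | zero => simpa using rfl
  | succ n ih => rw [pow_succ, pow_mul, ih, h]

/-- Let `F ⊆ K` be finite fields with `|F| = q`, `|K| = q^a`, and let `N > 1`, `a > 1`
with `gcd(a, N) = 1`. Then `GL_N(F)`, embedded in `GL_N(K)`, is a sufficiently small
subgroup of `GL_N(K)`: for every invertible `h` over `F` whose characteristic polynomial
over `K` is a power of an irreducible polynomial, all roots of that characteristic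
polynomial lie in `𝔽_{q^N}` (elements fixed by `x ↦ x^{q^N}`), and `𝔽_{q^N}` is a proper
subfield of `𝔽_{q^{aN}}`. -/
theorem stmt_11 {F K : Type} [Field F] [Field K] [Algebra F K] [Fintype F] [Fintype K]
    (q a N : ℕ) (hF : Fintype.card F = q) (hK : Fintype.card K = q ^ a)
    (hN : 1 < N) (ha : 1 < a) (hgcd : Nat.gcd a N = 1) :
    (∀ h : Matrix (Fin N) (Fin N) F, IsUnit h →
      ∀ f : Polynomial K, Irreducible f →
        (∃ l : ℕ, (h.map (algebraMap F K)).charpoly = f ^ l) →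
        ∀ x : AlgebraicClosure K, aeval x (h.map (algebraMap F K)).charpoly = 0 →
          x ^ q ^ N = x) ∧
    ∃ y : AlgebraicClosure K, y ^ q ^ (a * N) = y ∧ y ^ q ^ N ≠ y := by
  set A := AlgebraicClosure K with hA
  have hq : 1 < q := hF ▸ Fintype.one_lt_card
  have hqA : (q : A) = 0 := by
    have h1 : (q : F) = 0 := hF ▸ FiniteField.cast_card_eq_zero F
    have h2 := map_natCast (algebraMap F A) q
    rw [h1, map_zero] at h2
    exact h2.symm
  constructor
  · rintro h - f hf ⟨l, hl⟩ x hx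
    set φ := algebraMap F K with hφ
    set P := h.charpoly with hP
    have hmap : (h.map φ).charpoly = P.map φ := Matrix.charpoly_map h φ
    rw [hmap] at hl hx
    have hPmonic : P.Monic := h.charpoly_monic
    have hPdeg : P.natDegree = N := by
      rw [hP, h.charpoly_natDegree_eq_dim, Fintype.card_fin]
    have hfdeg : 0 < f.natDegree := hf.natDegree_pos
    have hNdeg : N = l * f.natDegree := by
      rw [← hPdeg, ← hPmonic.natDegree_map φ, hl, natDegree_pow]
    have hl0 : l ≠ 0 := by rintro rfl; omega
    have hxF : (aeval x) P = 0 := by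
      rw [← aeval_map_algebraMap K x P]; exact hx
    have hint : IsIntegral F x := ⟨P, hPmonic, by rwa [aeval_def] at hxF⟩
    set g := minpoly F x with hg
    have hgmonic : g.Monic := minpoly.monic hint
    have hgirr : Irreducible g := minpoly.irreducible hint
    have hgsep : g.Separable := PerfectField.separable_of_irreducible hgirr
    have hgdvd : g.map φ ∣ f ^ l := by
      rw [← hl]; exact Polynomial.map_dvd φ (minpoly.dvd F x hxF)
    have hfp : Prime f := hf.prime
    obtain ⟨i, hil, hassoc⟩ := (dvd_prime_pow hfp l).mp hgdvd
    have hgmapsep : (g.map φ).Separable := hgsep.map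
    have hgmapdeg : (g.map φ).natDegree = g.natDegree := hgmonic.natDegree_map φ
    have hi0 : i ≠ 0 := by
      rintro rfl
      rw [pow_zero] at hassoc
      have : IsUnit (g.map φ) := hassoc.symm.isUnit isUnit_one
      have h0 : (g.map φ).natDegree = 0 := natDegree_eq_zero_of_isUnit this
      rw [hgmapdeg] at h0
      have hpos := hgirr.natDegree_pos
      omega
    have hi2 : i < 2 := by
      by_contra hcon
      push_neg at hcon
      have hdvd2 : f * f ∣ g.map φ := by
        have : f ^ 2 ∣ f ^ i := pow_dvd_pow f hcon
        rw [pow_two] at this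
        exact this.trans hassoc.symm.dvd
      exact hf.not_isUnit (hgmapsep.squarefree f hdvd2)
    have hi1 : i = 1 := by omega
    rw [hi1, pow_one] at hassoc
    have hd : g.natDegree = f.natDegree := by
      rw [← hgmapdeg]
      exact natDegree_eq_of_degree_eq (degree_eq_degree_of_associated hassoc)
    -- x lies in a field of cardinality q ^ (g.natDegree)
    have hxd : x ^ q ^ g.natDegree = x := by
      haveI : FiniteDimensional F F⟮x⟯ := IntermediateField.adjoin.finiteDimensional hint
      haveI : Finite F⟮x⟯ := Module.finite_of_finite F
      haveI : Fintype F⟮x⟯ := Fintype.ofFinite _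
      have hcard : Fintype.card F⟮x⟯ = q ^ g.natDegree := by
        rw [Module.card_eq_pow_finrank (K := F), hF,
          IntermediateField.adjoin.finrank hint]
      have hgen := FiniteField.pow_card (IntermediateField.AdjoinSimple.gen F x)
      rw [hcard] at hgen
      have := congrArg (algebraMap F⟮x⟯ A) hgen
      rwa [map_pow, IntermediateField.AdjoinSimple.algebraMap_gen] at this
    have hqN : q ^ N = (q ^ g.natDegree) ^ l := by
      rw [← pow_mul]
      congr 1
      rw [hd, hNdeg]; ring
    rw [hqN]
    exact fix_pow_aux x _ hxd l
  · classical
    set m := q ^ (a * N) with hm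
    set n := q ^ N with hn
    have hm1 : 1 < m := Nat.one_lt_pow (by positivity) hq
    have hn1 : 1 < n := Nat.one_lt_pow (by omega) hq
    have hnm : n < m := Nat.pow_lt_pow_right hq (by nlinarith)
    have hmA : (m : A) = 0 := by rw [hm]; push_cast; rw [hqA]; exact zero_pow (by positivity)
    have hsep : (X ^ m - X : A[X]).Separable := by
      refine ⟨0, -1, ?_⟩
      have hder : derivative (X ^ m - X : A[X]) = -1 := by
        rw [derivative_sub, derivative_X_pow, derivative_X]
        rw [hmA, map_zero]
        ring
      rw [hder]
      ring
    have hndeg : (X ^ m - X : A[X]).natDegree = m :=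
      FiniteField.X_pow_card_sub_X_natDegree_eq A hm1
    have hne : (X ^ m - X : A[X]) ≠ 0 := FiniteField.X_pow_card_sub_X_ne_zero A hm1
    have hne' : (X ^ n - X : A[X]) ≠ 0 := FiniteField.X_pow_card_sub_X_ne_zero A hn1
    have hsplits : (X ^ m - X : A[X]).Splits := IsAlgClosed.splits _
    have hcard : (X ^ m - X : A[X]).roots.card = m := by
      rw [(splits_iff_card_roots).mp hsplits, hndeg]
    have hnodup : (X ^ m - X : A[X]).roots.Nodup := nodup_roots hsep
    set T := (X ^ m - X : A[X]).roots.toFinset with hT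
    set S := (X ^ n - X : A[X]).roots.toFinset with hS
    have hTcard : T.card = m := by
      rw [hT, Multiset.toFinset_card_of_nodup hnodup, hcard]
    have hScard : S.card ≤ n := by
      calc S.card ≤ (X ^ n - X : A[X]).roots.card := Multiset.toFinset_card_le _
        _ ≤ (X ^ n - X : A[X]).natDegree := (X ^ n - X : A[X]).card_roots'
        _ = n := FiniteField.X_pow_card_sub_X_natDegree_eq A hn1
    have hnotsub : ¬ T ⊆ S := by
      intro hsub
      have := Finset.card_le_card hsub
      omega
    obtain ⟨y, hyT, hyS⟩ := Finset.not_subset.mp hnotsub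
    refine ⟨y, ?_, ?_⟩
    · have := (mem_roots hne).mp (Multiset.mem_toFinset.mp hyT)
      have h0 : y ^ m - y = 0 := by simpa [IsRoot] using this
      linear_combination h0
    · intro hcon
      apply hyS
      rw [hS, Multiset.mem_toFinset, mem_roots hne']
      simp only [IsRoot, eval_sub, eval_pow, eval_X]
      linear_combination hcon
end

section
/- Let H be a finite group, I a normal subgroup of H with H/I abelian, and let φ₁, φ₂ be irreducible complex representations of H such that Hom_I(Res_I φ₂, Res_I φ₁) ≠ 0. Then there exists a one-dimensional character χ of H trivial on I with φ₂ ≅ φ₁ ⊗ χ. -/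
/-!
The `I`-equivariant linear maps `V₂ → V₁` form a nonzero finite-dimensional representation of
`H ⧸ I` under `g • f = φ₁ g ∘ f ∘ φ₂ g⁻¹`. Since `H ⧸ I` is abelian, these operators commute and
have a common eigenvector `f` with eigencharacter `c`. The eigenvector equation says precisely
that `f` intertwines `φ₂` with `φ₁ ⊗ c⁻¹`, and by Schur's lemma a nonzero intertwiner between
irreducible representations is an isomorphism.
-/

namespace Module.End

variable {K V ι : Type*} [Field K] [IsAlgClosed K] [AddCommGroup V] [Module K V]
  [FiniteDimensional K V] [Nontrivial V]

/- A minimal nonzero subspace invariant under every `f i` lies in an eigenspace of each `f i`: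
its intersection with that eigenspace is again invariant, by commutativity. -/
theorem exists_common_eigenvector_of_commute (f : ι → End K V)
    (hf : ∀ i j, Commute (f i) (f j)) :
    ∃ v : V, v ≠ 0 ∧ ∀ i, ∃ μ : K, f i v = μ • v := by
  obtain ⟨S, ⟨hS0, hSf⟩, hSmin⟩ := exists_minimal_of_wellFoundedLT
    (fun S : Submodule K V => S ≠ ⊥ ∧ ∀ i, S ≤ S.comap (f i)) ⟨⊤, top_ne_bot, fun _ => le_top⟩
  have hscalar : ∀ i, ∃ μ : K, ∀ v ∈ S, f i v = μ • v := by
    intro i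
    have : Nontrivial S := Submodule.nontrivial_iff_ne_bot.mpr hS0
    obtain ⟨μ, hμ⟩ := exists_eigenvalue ((f i).restrict (hSf i))
    obtain ⟨x, hx⟩ := hμ.exists_hasEigenvector
    let E := S ⊓ (f i).eigenspace μ
    have hE : E ≠ ⊥ := by
      refine (Submodule.ne_bot_iff _).mpr ⟨x, ⟨x.2, ?_⟩, by simpa using hx.2⟩
      have := congrArg Subtype.val hx.apply_eq_smul
      simpa [mem_eigenspace_iff] using this
    have hEf : ∀ j, E ≤ E.comap (f j) := by
      intro j v hv
      obtain ⟨hvS, hvE⟩ := Submodule.mem_inf.mp hv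
      refine Submodule.mem_inf.mpr ⟨hSf j hvS, mem_eigenspace_iff.mpr ?_⟩
      rw [← mul_apply, (hf i j).eq, mul_apply, mem_eigenspace_iff.mp hvE, map_smul]
    have hSE : S ≤ E := hSmin ⟨hE, hEf⟩ inf_le_left
    exact ⟨μ, fun v hv => mem_eigenspace_iff.mp (hSE hv).2⟩
  choose μ hμ using hscalar
  obtain ⟨v, hvS, hv0⟩ := Submodule.exists_mem_ne_zero_of_ne_bot hS0
  exact ⟨v, hv0, fun i => ⟨μ i, hμ i v hvS⟩⟩

end Module.End

namespace Representation

variable {k G V W : Type*} [Field k] [Group G] [AddCommGroup V] [Module k V]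
  [AddCommGroup W] [Module k W]

theorem exists_eigenvector_of_commute [IsAlgClosed k] [FiniteDimensional k V] [Nontrivial V]
    (ρ : Representation k G V) (hρ : ∀ g h, Commute (ρ g) (ρ h)) :
    ∃ v : V, v ≠ 0 ∧ ∃ χ : G →* kˣ, ∀ g, ρ g v = (χ g : k) • v := by
  obtain ⟨v, hv0, hμ⟩ := Module.End.exists_common_eigenvector_of_commute ρ hρ
  choose μ hμ using hμ
  have hinj := smul_left_injective k hv0
  let χ : G →* k :=
    { toFun := μ
      map_one' := hinj (by simp only [← hμ, map_one, Module.End.one_apply, one_smul])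
      map_mul' := fun g h => hinj (show μ (g * h) • v = (μ g * μ h) • v by
        rw [← hμ, map_mul, Module.End.mul_apply, hμ h, map_smul, hμ g, smul_smul, mul_comm]) }
  exact ⟨v, hv0, χ.toHomUnits, hμ⟩

/-- The representation `ρ ⊗ χ`, realised on `V` itself. -/
def twist (ρ : Representation k G V) (χ : G →* kˣ) : Representation k G V where
  toFun g := (χ g : k) • ρ g
  map_one' := by simp
  map_mul' g h := by
    ext v
    simp [smul_smul, mul_comm]

@[simp]
theorem twist_apply (ρ : Representation k G V) (χ : G →* kˣ) (g : G) (v : V) :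
    ρ.twist χ g v = (χ g : k) • ρ g v := rfl

theorem isIrreducible_iff (ρ : Representation k G V) :
    IsIrreducible ρ ↔ Nontrivial V ∧
      ∀ S : Submodule k V, (∀ g v, v ∈ S → ρ g v ∈ S) → S = ⊥ ∨ S = ⊤ := by
  constructor
  · intro h
    refine ⟨(Submodule.nontrivial_iff k).mp (nontrivial_of_ne ⊥ ⊤ fun e => ?_), fun S hS => ?_⟩
    · exact bot_ne_top (Subrepresentation.toSubmodule_injective (ρ := ρ) e)
    · exact (h.eq_bot_or_eq_top ⟨S, hS⟩).imp (congrArg Subrepresentation.toSubmodule)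
        (congrArg Subrepresentation.toSubmodule)
  · rintro ⟨hV, h⟩
    exact
      { exists_pair_ne := ⟨⊥, ⊤, fun e => bot_ne_top (congrArg Subrepresentation.toSubmodule e)⟩
        eq_bot_or_eq_top := fun S => (h S.toSubmodule S.apply_mem_toSubmodule).imp
          (fun e => Subrepresentation.toSubmodule_injective e)
          (fun e => Subrepresentation.toSubmodule_injective e) }

theorem isIrreducible_twist_iff (ρ : Representation k G V) (χ : G →* kˣ) :
    IsIrreducible (ρ.twist χ) ↔ IsIrreducible ρ := by
  have hinv : ∀ S : Submodule k V, ∀ g v, ρ.twist χ g v ∈ S ↔ ρ g v ∈ S := fun S g v =>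
    S.smul_mem_iff' (χ g)
  simp only [isIrreducible_iff, hinv]

theorem isIntertwiningMap_twist_inv_of_linHom_apply_eq_smul {ρ : Representation k G V}
    {σ : Representation k G W} {f : V →ₗ[k] W} {χ : G →* kˣ}
    (hf : ∀ g, linHom ρ σ g f = (χ g : k) • f) : IsIntertwiningMap ρ (σ.twist χ⁻¹) f := by
  refine ⟨fun g v => ?_⟩
  have := LinearMap.congr_fun (hf g) (ρ g v)
  simp only [linHom_apply, LinearMap.comp_apply, LinearMap.smul_apply] at this
  rw [← Module.End.mul_apply, ← map_mul, inv_mul_cancel, map_one, Module.End.one_apply] at this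
  rw [twist_apply, this, MonoidHom.inv_apply, Units.val_inv_eq_inv_val,
    inv_smul_smul₀ (χ g).ne_zero]

end Representation

open Representation

theorem stmt_13_general {H V₁ V₂ : Type} [Group H]
    [AddCommGroup V₁] [Module ℂ V₁] [AddCommGroup V₂] [Module ℂ V₂]
    [FiniteDimensional ℂ V₁] [FiniteDimensional ℂ V₂]
    (I : Subgroup H) [I.Normal] (hab : ∀ a b : H ⧸ I, a * b = b * a)
    (φ₁ : Representation ℂ H V₁) (φ₂ : Representation ℂ H V₂)
    (hirr₁ : Nontrivial V₁ ∧
      ∀ S : Submodule ℂ V₁, (∀ (g : H) (v : V₁), v ∈ S → φ₁ g v ∈ S) → S = ⊥ ∨ S = ⊤)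
    (hirr₂ : Nontrivial V₂ ∧
      ∀ S : Submodule ℂ V₂, (∀ (g : H) (v : V₂), v ∈ S → φ₂ g v ∈ S) → S = ⊥ ∨ S = ⊤)
    (hhom : ∃ f : V₂ →ₗ[ℂ] V₁, f ≠ 0 ∧ ∀ i ∈ I, ∀ v : V₂, f (φ₂ i v) = φ₁ i (f v)) :
    ∃ χ : H →* ℂˣ, (∀ i ∈ I, χ i = 1) ∧
      ∃ e : V₁ ≃ₗ[ℂ] V₂, ∀ (g : H) (v : V₁), e ((χ g : ℂ) • φ₁ g v) = φ₂ g (e v) := by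
  obtain ⟨f, hf0, hfI⟩ := hhom
  have hfW : f ∈ invariants ((linHom φ₂ φ₁).comp I.subtype) := fun i => by
    ext v
    simp [linHom_apply, ← hfI]
  have : Nontrivial (invariants ((linHom φ₂ φ₁).comp I.subtype)) :=
    nontrivial_of_ne ⟨f, hfW⟩ 0 (by simpa using hf0)
  obtain ⟨w, hw0, c, hc⟩ := ((linHom φ₂ φ₁).quotientToInvariants I).exists_eigenvector_of_commute
    fun a b => by rw [Commute, SemiconjBy, ← map_mul, ← map_mul, hab]
  let χ := c.comp (QuotientGroup.mk' I)
  have hw : IsIntertwiningMap φ₂ (φ₁.twist χ⁻¹) w.1 :=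
    isIntertwiningMap_twist_inv_of_linHom_apply_eq_smul fun g => congrArg Subtype.val (hc g)
  have : IsIrreducible φ₂ := (isIrreducible_iff φ₂).mpr hirr₂
  have : IsIrreducible (φ₁.twist χ⁻¹) :=
    (isIrreducible_twist_iff φ₁ χ⁻¹).mpr ((isIrreducible_iff φ₁).mpr hirr₁)
  let F : IntertwiningMap φ₂ (φ₁.twist χ⁻¹) := w.1.intertwiningMap_of_isIntertwiningMap _ _ hw.1
  have hF : Function.Bijective F := (IsIrreducible.bijective_or_eq_zero F).resolve_right fun h =>
    hw0 (Subtype.ext (congrArg IntertwiningMap.toLinearMap h))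
  refine ⟨χ⁻¹, fun i hi => ?_, (F.ofBijective hF).symm.toLinearEquiv, fun g v => ?_⟩
  · simp [χ, (QuotientGroup.eq_one_iff i).mpr hi]
  · exact IntertwiningMap.isIntertwining _ _ (F.ofBijective hF).symm.toIntertwiningMap g v

/-- Let `H` be a finite group, `I ⊴ H` with `H/I` abelian, and `φ₁, φ₂` irreducible
finite-dimensional complex representations of `H` with `Hom_I(Res_I φ₂, Res_I φ₁) ≠ 0`.
Then `φ₂ ≅ φ₁ ⊗ χ` for a one-dimensional character `χ` of `H` trivial on `I`. -/
theorem stmt_13 {H V₁ V₂ : Type} [Group H] [Fintype H]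
    [AddCommGroup V₁] [Module ℂ V₁] [AddCommGroup V₂] [Module ℂ V₂]
    [FiniteDimensional ℂ V₁] [FiniteDimensional ℂ V₂]
    (I : Subgroup H) [I.Normal] (hab : ∀ a b : H ⧸ I, a * b = b * a)
    (φ₁ : Representation ℂ H V₁) (φ₂ : Representation ℂ H V₂)
    (hirr₁ : Nontrivial V₁ ∧
      ∀ S : Submodule ℂ V₁, (∀ (g : H) (v : V₁), v ∈ S → φ₁ g v ∈ S) → S = ⊥ ∨ S = ⊤)
    (hirr₂ : Nontrivial V₂ ∧
      ∀ S : Submodule ℂ V₂, (∀ (g : H) (v : V₂), v ∈ S → φ₂ g v ∈ S) → S = ⊥ ∨ S = ⊤)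
    (hhom : ∃ f : V₂ →ₗ[ℂ] V₁, f ≠ 0 ∧ ∀ i ∈ I, ∀ v : V₂, f (φ₂ i v) = φ₁ i (f v)) :
    ∃ χ : H →* ℂˣ, (∀ i ∈ I, χ i = 1) ∧
      ∃ e : V₁ ≃ₗ[ℂ] V₂, ∀ (g : H) (v : V₁), e ((χ g : ℂ) • φ₁ g v) = φ₂ g (e v) :=
  stmt_13_general I hab φ₁ φ₂ hirr₁ hirr₂ hhom
end

section
/- Let R be a commutative ring, e ≥ 2, m ≥ 1, N = em. Let b be the N×N block matrix (with m×m blocks B_{ij}, 1 ≤ i,j ≤ e) where B_{(i+1)i} = C_i for 1 ≤ i < e, B_{1e} = C_e, and all other blocks are zero. Then b^e is block diagonal, with i-th diagonal block equal to the cyclic product C_{i-1}C_{i-2}⋯C_1 C_e C_{e-1}⋯C_i (indices read cyclically); in particular the e-th diagonal block of b^e is C_{e-1}C_{e-2}⋯C_1 C_e, and the characteristic polynomial of b^e equals the product over i of the characteristic polynomials of these cyclic products, which all coincide up to the stated cyclic rotation. -/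
open Polynomial Matrix

private theorem coe_list_eq (e : ℕ) (l : List ℕ) :
    (do let a ← l; pure ((a : ZMod e)) : List (ZMod e)) = l.map (Nat.cast : ℕ → ZMod e) := by
  induction l with
  | nil => rfl
  | cons x xs ih =>
      show (x :: xs).flatMap _ = _
      rw [List.flatMap_cons]
      show [(x : ZMod e)] ++ (do let a ← xs; pure ((a : ZMod e)) : List (ZMod e)) = _
      rw [ih, List.singleton_append, List.map_cons]

private theorem mul_X_pow_cancel {R : Type} [CommRing R] {p q : R[X]} {n : ℕ}
    (h : p * X ^ n = q * X ^ n) : p = q := by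
  ext k
  have := congrArg (fun f => Polynomial.coeff f (k + n)) h
  simpa [Polynomial.coeff_mul_X_pow] using this

private theorem charpoly_mul_comm' {R : Type} [CommRing R] {n : Type} [DecidableEq n] [Fintype n]
    (A B : Matrix n n R) : (A * B).charpoly = (B * A).charpoly := by
  set x : R[X] := Polynomial.X with hx
  set A' : Matrix n n R[X] := (Polynomial.C : R →+* R[X]).mapMatrix A with hA'
  set B' : Matrix n n R[X] := (Polynomial.C : R →+* R[X]).mapMatrix B with hB'
  have key : ∀ A B : Matrix n n R[X],
      ((x • (1 : Matrix n n R[X]) - A * B).det) * x ^ Fintype.card n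
        = ((x • (1 : Matrix n n R[X]) - B * A).det) * x ^ Fintype.card n := by
    intro A B
    have TL : (x • (1 : Matrix n n R[X])) * (1 : Matrix n n R[X]) + A * (-B)
        = x • (1 : Matrix n n R[X]) - A * B := by
      simp [Matrix.mul_neg, sub_eq_add_neg]
    have TR : (x • (1 : Matrix n n R[X])) * 0 + A * (x • (1 : Matrix n n R[X])) = x • A := by
      simp [Matrix.mul_smul]
    have BL : B * (1 : Matrix n n R[X]) + (1 : Matrix n n R[X]) * (-B) = 0 := by simp
    have BR : B * 0 + (1 : Matrix n n R[X]) * (x • (1 : Matrix n n R[X]))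
        = x • (1 : Matrix n n R[X]) := by simp
    have h1 : fromBlocks (x • (1 : Matrix n n R[X])) A B 1
          * fromBlocks 1 0 (-B) (x • (1 : Matrix n n R[X]))
        = fromBlocks (x • (1 : Matrix n n R[X]) - A * B) (x • A) 0
            (x • (1 : Matrix n n R[X])) := by
      rw [Matrix.fromBlocks_multiply, TL, TR, BL, BR]
    have TL2 : (1 : Matrix n n R[X]) * (x • (1 : Matrix n n R[X])) + 0 * B
        = x • (1 : Matrix n n R[X]) := by simp
    have TR2 : (1 : Matrix n n R[X]) * A + 0 * (1 : Matrix n n R[X]) = A := by simp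
    have BL2 : (-B) * (x • (1 : Matrix n n R[X])) + (x • (1 : Matrix n n R[X])) * B = 0 := by
      simp [Matrix.mul_smul, Matrix.smul_mul]
    have BR2 : (-B) * A + (x • (1 : Matrix n n R[X])) * (1 : Matrix n n R[X])
        = x • (1 : Matrix n n R[X]) - B * A := by
      simp [Matrix.neg_mul, sub_eq_add_neg, add_comm]
    have h2 : fromBlocks 1 0 (-B) (x • (1 : Matrix n n R[X]))
          * fromBlocks (x • (1 : Matrix n n R[X])) A B 1
        = fromBlocks (x • (1 : Matrix n n R[X])) A 0
            (x • (1 : Matrix n n R[X]) - B * A) := by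
      rw [Matrix.fromBlocks_multiply, TL2, TR2, BL2, BR2]
    have hdet : (fromBlocks (x • (1 : Matrix n n R[X]) - A * B) (x • A) 0
          (x • (1 : Matrix n n R[X]))).det
        = (fromBlocks (x • (1 : Matrix n n R[X])) A 0
            (x • (1 : Matrix n n R[X]) - B * A)).det := by
      rw [← h1, ← h2, Matrix.det_mul, Matrix.det_mul, mul_comm]
    rw [Matrix.det_fromBlocks_zero₂₁, Matrix.det_fromBlocks_zero₂₁] at hdet
    have hxdet : (x • (1 : Matrix n n R[X])).det = x ^ Fintype.card n := by
      rw [Matrix.det_smul, Matrix.det_one, mul_one]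
    rw [hxdet] at hdet
    rw [hdet]; ring
  have hscalar : Matrix.scalar n (X : R[X]) = (X : R[X]) • (1 : Matrix n n R[X]) := by
    rw [Matrix.scalar_apply]
    ext i j
    by_cases h : i = j <;> simp [Matrix.diagonal_apply, Matrix.one_apply, h]
  have hmapAB : (Polynomial.C : R →+* R[X]).mapMatrix (A * B) = A' * B' := by
    rw [_root_.map_mul]
  have hmapBA : (Polynomial.C : R →+* R[X]).mapMatrix (B * A) = B' * A' := by
    rw [_root_.map_mul]
  have := mul_X_pow_cancel (key A' B')
  rw [Matrix.charpoly, Matrix.charpoly, charmatrix, charmatrix, hmapAB, hmapBA, hscalar]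
  exact this

private theorem charpoly_blockDiag {R : Type} [CommRing R] {n o : Type}
    [DecidableEq n] [Fintype n] [DecidableEq o] [Fintype o] (M : o → Matrix n n R) :
    (Matrix.blockDiagonal M).charpoly = ∏ i, (M i).charpoly := by
  have hch : charmatrix (Matrix.blockDiagonal M)
      = Matrix.blockDiagonal (fun i => charmatrix (M i)) := by
    ext ⟨a, i⟩ ⟨b, j⟩
    by_cases h : i = j
    · subst h
      by_cases h2 : a = b
      · subst h2; simp [Matrix.blockDiagonal_apply]
      · simp [Matrix.charmatrix_apply, Matrix.blockDiagonal_apply, Matrix.diagonal_apply,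
          Prod.ext_iff, h2]
    · simp [Matrix.charmatrix_apply, Matrix.blockDiagonal_apply, Matrix.diagonal_apply,
        Prod.ext_iff, h]
  rw [Matrix.charpoly, hch, Matrix.det_blockDiagonal]
  rfl

private theorem pow_apply_aux {R : Type} [CommRing R] {e m : ℕ} [NeZero e]
    (C : ZMod e → Matrix (Fin m) (Fin m) R)
    (b : Matrix (ZMod e × Fin m) (ZMod e × Fin m) R)
    (hb : ∀ p q : ZMod e × Fin m, b p q = if p.1 = q.1 + 1 then C q.1 p.2 q.2 else 0)
    (k : ℕ) (p q : ZMod e × Fin m) :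
    (b ^ k) p q = if p.1 = q.1 + (k : ZMod e) then
      (((List.range k).map (fun t : ℕ => C (p.1 - 1 - ((t : ℕ) : ZMod e)))).prod) p.2 q.2
    else 0 := by
  induction k generalizing p q with
  | zero =>
      simp only [pow_zero, Nat.cast_zero, add_zero, List.range_zero, List.map_nil, List.prod_nil]
      rw [Matrix.one_apply]
      by_cases h : p.1 = q.1
      · by_cases h2 : p.2 = q.2
        · simp [h, h2, Prod.ext_iff, Matrix.one_apply]
        · simp [h, h2, Prod.ext_iff, Matrix.one_apply]
      · simp [h, Prod.ext_iff]
  | succ k ih =>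
      rw [pow_succ', Matrix.mul_apply]
      have step1 : ∑ r : ZMod e × Fin m, b p r * (b ^ k) r q
          = ∑ r : ZMod e × Fin m, if p.1 - 1 = r.1 then C r.1 p.2 r.2 * (b ^ k) r q else 0 := by
        apply Finset.sum_congr rfl
        intro r _
        rw [hb]
        by_cases h : p.1 = r.1 + 1
        · rw [if_pos h, if_pos (by rw [h]; ring)]
        · rw [if_neg h, if_neg (fun hc => h (by rw [← hc]; ring)), zero_mul]
      rw [step1, Fintype.sum_prod_type]
      rw [Finset.sum_eq_single (p.1 - 1)]
      rotate_left
      · intro r1 _ hne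
        apply Finset.sum_eq_zero
        intro r2 _
        rw [if_neg (fun hc => hne hc.symm)]
      · intro habs; exact absurd (Finset.mem_univ _) habs
      simp only [eq_self_iff_true, if_true]
      have hcond : (p.1 = q.1 + ((k + 1 : ℕ) : ZMod e)) ↔ (p.1 - 1 = q.1 + (k : ZMod e)) := by
        rw [sub_eq_iff_eq_add]
        push_cast
        rw [add_assoc]
      by_cases h : p.1 = q.1 + ((k + 1 : ℕ) : ZMod e)
      · rw [if_pos h]
        have h' := hcond.mp h
        have hprod : (((List.range (k + 1)).map
              (fun t : ℕ => C (p.1 - 1 - ((t : ℕ) : ZMod e)))).prod)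
            = C (p.1 - 1) * (((List.range k).map
              (fun t : ℕ => C (p.1 - 1 - 1 - ((t : ℕ) : ZMod e)))).prod) := by
          rw [List.range_succ_eq_map, List.map_cons, List.prod_cons, List.map_map]
          congr 1
          · norm_num
          · have hfun : ((fun t : ℕ => C (p.1 - 1 - ((t : ℕ) : ZMod e))) ∘ Nat.succ)
                = fun t : ℕ => C (p.1 - 1 - 1 - ((t : ℕ) : ZMod e)) := by
              funext t
              show C (p.1 - 1 - ((t + 1 : ℕ) : ZMod e)) = C (p.1 - 1 - 1 - ((t : ℕ) : ZMod e))
              congr 1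
              push_cast
              ring
            rw [hfun]
        rw [hprod, Matrix.mul_apply]
        apply Finset.sum_congr rfl
        intro r2 _
        rw [ih, if_pos h']
      · rw [if_neg h]
        apply Finset.sum_eq_zero
        intro r2 _
        rw [ih, if_neg (fun hc => h (hcond.mpr hc)), mul_zero]

/-- Block matrix computation: let `b` be the `(em)×(em)` block matrix over a commutative
ring `R` whose only nonzero `m×m` blocks are `B_{(i+1) i} = C i` (block indices cyclic in
`ZMod e`, so the corner block in position `(0, e-1)` is `C (e-1)`). Then `b^e` is block
diagonal, the `i`-th diagonal block being the cyclic product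
`C (i-1) * C (i-2) * ⋯ * C (i-e)`; all these cyclic products have the same characteristic
polynomial, and the characteristic polynomial of `b^e` is its `e`-th power. -/
theorem stmt_14 {R : Type} [CommRing R] (e m : ℕ) [NeZero e] (he : 2 ≤ e) (hm : 1 ≤ m)
    (C : ZMod e → Matrix (Fin m) (Fin m) R)
    (b : Matrix (ZMod e × Fin m) (ZMod e × Fin m) R)
    (hb : ∀ p q : ZMod e × Fin m, b p q = if p.1 = q.1 + 1 then C q.1 p.2 q.2 else 0)
    (P : ZMod e → Matrix (Fin m) (Fin m) R)
    (hP : ∀ i : ZMod e, P i = ((List.range e).map (fun t => C (i - 1 - (t : ZMod e)))).prod) :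
    (∀ p q : ZMod e × Fin m, (b ^ e) p q = if p.1 = q.1 then P p.1 p.2 q.2 else 0) ∧
    (∀ i : ZMod e, (P i).charpoly = (P 0).charpoly) ∧
    (b ^ e).charpoly = (P 0).charpoly ^ e := by
  have hP' : ∀ i : ZMod e,
      P i = ((List.range e).map (fun t : ℕ => C (i - 1 - ((t : ℕ) : ZMod e)))).prod := by
    intro i
    rw [hP, coe_list_eq, List.map_map]
    rfl
  have part1 : ∀ p q : ZMod e × Fin m, (b ^ e) p q = if p.1 = q.1 then P p.1 p.2 q.2 else 0 := by
    intro p q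
    rw [pow_apply_aux C b hb e p q, ZMod.natCast_self, add_zero, hP']
  have e1 : 1 ≤ e := le_trans (by norm_num) he
  have hesub : e - 1 + 1 = e := Nat.succ_pred_eq_of_pos e1
  have hcastE : ((e - 1 : ℕ) : ZMod e) = -1 := by
    have h0 : ((e - 1 : ℕ) : ZMod e) + 1 = (((e - 1) + 1 : ℕ) : ZMod e) := by push_cast; ring
    rw [hesub, ZMod.natCast_self] at h0
    linear_combination h0
  have step : ∀ i : ZMod e, (P (i + 1)).charpoly = (P i).charpoly := by
    intro i
    set Q : Matrix (Fin m) (Fin m) R :=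
      ((List.range (e - 1)).map (fun t : ℕ => C (i - 1 - ((t : ℕ) : ZMod e)))).prod with hQ
    have h1 : P (i + 1) = C i * Q := by
      rw [hP' (i + 1), hQ]
      conv_lhs => rw [show List.range e = List.range ((e - 1) + 1) from by rw [hesub]]
      rw [List.range_succ_eq_map, List.map_cons, List.prod_cons, List.map_map]
      congr 1
      · norm_num
      · have hfun : ((fun t : ℕ => C (i + 1 - 1 - ((t : ℕ) : ZMod e))) ∘ Nat.succ)
            = fun t : ℕ => C (i - 1 - ((t : ℕ) : ZMod e)) := by
          funext t
          show C (i + 1 - 1 - ((t + 1 : ℕ) : ZMod e)) = C (i - 1 - ((t : ℕ) : ZMod e))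
          congr 1
          push_cast
          ring
        rw [hfun]
    have h2 : P i = Q * C i := by
      rw [hP' i, hQ]
      conv_lhs => rw [show List.range e = List.range ((e - 1) + 1) from by rw [hesub]]
      rw [List.range_succ, List.map_append, List.prod_append]
      simp only [List.map_cons, List.map_nil, List.prod_cons, List.prod_nil, mul_one]
      congr 1
      congr 1
      rw [hcastE]
      ring
    rw [h1, h2, _root_.charpoly_mul_comm']
  have part2n : ∀ n : ℕ, (P ((n : ℕ) : ZMod e)).charpoly = (P 0).charpoly := by
    intro n
    induction n with
    | zero => simp
    | succ n ih =>
        have hc : (((n + 1 : ℕ)) : ZMod e) = ((n : ℕ) : ZMod e) + 1 := by push_cast; ring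
        rw [hc, step, ih]
  have part2 : ∀ i : ZMod e, (P i).charpoly = (P 0).charpoly := by
    intro i
    have hi : ((i.val : ℕ) : ZMod e) = i := ZMod.natCast_rightInverse i
    rw [← hi, part2n]
  refine ⟨part1, part2, ?_⟩
  have hre : b ^ e = (Matrix.reindex (Equiv.prodComm (Fin m) (ZMod e))
      (Equiv.prodComm (Fin m) (ZMod e))) (Matrix.blockDiagonal fun i => P i) := by
    ext p q
    rw [Matrix.reindex_apply, Matrix.submatrix_apply, part1]
    simp [Matrix.blockDiagonal_apply, eq_comm]
  rw [hre, Matrix.charpoly_reindex, charpoly_blockDiag]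
  calc (∏ i : ZMod e, (P i).charpoly) = ∏ _i : ZMod e, (P 0).charpoly :=
        Finset.prod_congr rfl (fun i _ => part2 i)
    _ = (P 0).charpoly ^ e := by rw [Finset.prod_const, Finset.card_univ, ZMod.card]
end
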